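/- arXiv:2506.15370 — 6 statements merged into one kernel-verified Lean document; each statement's English description precedes it below -/
import Mathlib

section
/- Let U ∈ R^{n×m} have unit columns positively spanning R^n, and let S be a subset of columns with 1 ≤ rank(S) ≤ n-1, S = U ∩ span(S) (a flat), such that span(S) ∩ span(U \ S) ≠ {0}. Then there exists a basis B ∈ B(U) with |S ∩ B| < rank(S). Consequently, for every γ in the relative interior of (1/n)P(M_U) one has Σ_{u_i ∈ S} γ_i < rank(S)/n. -/
/-!
Take a maximal linearly independent set `T` of columns outside `S`. Since the spans of `S` and of
its complement together give `ℝⁿ` and meet nontrivially, `|T| = rank(U ∖ S) ≥ n - rank S + 1`.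
Extending `T` to a basis `B` of columns leaves at most `rank S - 1` elements of `B` in `S`.

For the second claim, `γ ↦ ∑_{i ∈ S} γᵢ` is at most `rank S / n` on `(1/n) P(M_U)`, because every
basis meets `S` in independent vectors of `span S`, and it is strictly smaller at the vertex
`χ(B) / n`, hence strictly smaller on the whole relative interior.
-/

open MeasureTheory Module Submodule
open scoped RealInnerProductSpace Pointwise

def IsBasisIndex {n m : ℕ} (U : Fin m → EuclideanSpace ℝ (Fin n)) (I : Finset (Fin m)) : Prop :=
  I.card = n ∧ Submodule.span ℝ (U '' ↑I) = ⊤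

noncomputable def matroidPolytope {n m : ℕ} (U : Fin m → EuclideanSpace ℝ (Fin n)) :
    Set (Fin m → ℝ) :=
  convexHull ℝ {x | ∃ I : Finset (Fin m), IsBasisIndex U I ∧
    x = fun j => if j ∈ I then (1 : ℝ) else 0}

def PosSpanning {n m : ℕ} (U : Fin m → EuclideanSpace ℝ (Fin n)) : Prop :=
  ∀ x : EuclideanSpace ℝ (Fin n),
    ∃ c : Fin m → ℝ, (∀ i, 0 ≤ c i) ∧ x = ∑ i, c i • U i

open Filter Topology

section IntrinsicInterior

variable {E : Type*} [AddCommGroup E] [Module ℝ E] [TopologicalSpace E]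
  [IsTopologicalAddGroup E] [ContinuousSMul ℝ E]

/-- Near `γ` the line from `p` through `γ` stays in `s`; slightly beyond `γ`, `f` would exceed `c`
unless `f γ < c`. -/
theorem LinearMap.apply_lt_of_mem_intrinsicInterior {s : Set E} {f : E →ₗ[ℝ] ℝ} {c : ℝ}
    (hle : ∀ x ∈ s, f x ≤ c) {p : E} (hp : p ∈ s) (hpc : f p < c) {γ : E}
    (hγ : γ ∈ intrinsicInterior ℝ s) : f γ < c := by
  obtain ⟨x, hx, rfl⟩ := mem_intrinsicInterior.mp hγ
  let g : ℝ → affineSpan ℝ s := fun t =>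
    ⟨AffineMap.lineMap p (x : E) t, AffineMap.lineMap_mem t (subset_affineSpan ℝ s hp) x.2⟩
  have hg : Continuous g := AffineMap.lineMap_continuous.subtype_mk _
  have hnear : ∀ᶠ t in 𝓝 (1 : ℝ), g t ∈ interior (((↑) : affineSpan ℝ s → E) ⁻¹' s) :=
    hg.continuousAt.eventually_mem (by simpa [g] using isOpen_interior.mem_nhds hx)
  obtain ⟨t, hts, ht1⟩ :=
    ((hnear.filter_mono nhdsWithin_le_nhds).and (self_mem_nhdsWithin (s := Set.Ioi 1))).exists
  have hft := hle _ (interior_subset (s := ((↑) : affineSpan ℝ s → E) ⁻¹' s) hts)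
  simp only [g, AffineMap.lineMap_apply_module, map_add, _root_.map_smul, smul_eq_mul] at hft
  by_contra! hc
  nlinarith

end IntrinsicInterior

section LinearIndepOn

variable {ι K V : Type*} [Field K] [AddCommGroup V] [Module K V] {v : ι → V}

theorem LinearIndepOn.card_eq_finrank_span {s : Finset ι} (hs : LinearIndepOn K v s) :
    s.card = finrank K (span K (v '' s)) := by
  rw [Set.image_eq_range, finrank_span_eq_card hs]
  simp

theorem LinearIndepOn.card_inter_le_finrank_span {B : Finset ι} (hB : LinearIndepOn K v B)
    (S : Finset ι) [DecidableEq ι] : (S ∩ B).card ≤ finrank K (span K (v '' S)) := by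
  have := FiniteDimensional.span_of_finite K (S.finite_toSet.image v)
  rw [(hB.mono (by simp)).card_eq_finrank_span]
  exact Submodule.finrank_mono (span_mono (Set.image_mono (by simp)))

theorem exists_linearIndepOn_subset_card_eq_finrank (v : ι → V) (s : Finset ι) :
    ∃ t ⊆ s, LinearIndepOn K v t ∧ t.card = finrank K (span K (v '' s)) := by
  obtain ⟨b, hbs, -, hspan, hb⟩ :=
    exists_linearIndepOn_extension (linearIndepOn_empty K v) (Set.empty_subset (s : Set ι))
  obtain ⟨t, rfl⟩ := (s.finite_toSet.subset hbs).exists_finset_coe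
  refine ⟨t, Finset.coe_subset.mp hbs, hb, ?_⟩
  rw [hb.card_eq_finrank_span,
    le_antisymm (span_mono (Set.image_mono hbs)) (span_le.mpr hspan)]

theorem finrank_lt_finrank_span_add_finrank_span_compl [Fintype ι] [DecidableEq ι]
    [FiniteDimensional K V] (hv : span K (Set.range v) = ⊤) (S : Finset ι)
    (hS : span K (v '' S) ⊓ span K (v '' ↑Sᶜ) ≠ ⊥) :
    finrank K V < finrank K (span K (v '' S)) + finrank K (span K (v '' ↑Sᶜ)) := by
  have hsup : span K (v '' S) ⊔ span K (v '' ↑Sᶜ) = ⊤ := by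
    rw [← span_union, ← Set.image_union, Finset.coe_compl, Set.union_compl_self,
      Set.image_univ, hv]
  have hdim := Submodule.finrank_sup_add_finrank_inf_eq (span K (v '' S)) (span K (v '' ↑Sᶜ))
  rw [hsup, finrank_top] at hdim
  have := Submodule.one_le_finrank_iff.mpr hS
  omega

end LinearIndepOn

section BasisIndex

variable {n m : ℕ} {U : Fin m → EuclideanSpace ℝ (Fin n)}

theorem PosSpanning.span_range_eq_top (hpos : PosSpanning U) : span ℝ (Set.range U) = ⊤ := by
  refine eq_top_iff.mpr fun x _ => ?_
  obtain ⟨c, -, rfl⟩ := hpos x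
  exact sum_mem fun i _ => smul_mem _ _ (subset_span (Set.mem_range_self i))

theorem IsBasisIndex.linearIndepOn {B : Finset (Fin m)} (hB : IsBasisIndex U B) :
    LinearIndepOn ℝ U B :=
  linearIndependent_of_top_le_span_of_card_eq_finrank
    (by rw [← Set.image_eq_range, hB.2]) (by simp [hB.1])

theorem exists_isBasisIndex_superset (hU : span ℝ (Set.range U) = ⊤) {T : Finset (Fin m)}
    (hT : LinearIndepOn ℝ U T) : ∃ B, T ⊆ B ∧ IsBasisIndex U B := by
  obtain ⟨b, -, hTb, hspan, hb⟩ := exists_linearIndepOn_extension hT (Set.subset_univ _)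
  obtain ⟨B, rfl⟩ := b.toFinite.exists_finset_coe
  have hspanB : span ℝ (U '' B) = ⊤ := by
    rw [eq_top_iff, ← hU, ← Set.image_univ]
    exact span_le.mpr hspan
  refine ⟨B, Finset.coe_subset.mp hTb, ?_, hspanB⟩
  rw [hb.card_eq_finrank_span, hspanB, finrank_top, finrank_euclideanSpace_fin]

theorem sum_le_finrank_of_mem_matroidPolytope (S : Finset (Fin m)) {y : Fin m → ℝ}
    (hy : y ∈ matroidPolytope U) : ∑ i ∈ S, y i ≤ finrank ℝ (span ℝ (U '' S)) := by
  classical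
  have hconv : Convex ℝ {y : Fin m → ℝ | ∑ i ∈ S, y i ≤ finrank ℝ (span ℝ (U '' S))} :=
    convex_halfSpace_le
      ⟨fun _ _ => Finset.sum_add_distrib, fun _ _ => (Finset.mul_sum _ _ _).symm⟩ _
  refine convexHull_min ?_ hconv hy
  rintro _ ⟨I, hI, rfl⟩
  simp only [Set.mem_ofPred_eq, Finset.sum_boole, Finset.filter_mem_eq_inter, Nat.cast_le]
  exact hI.linearIndepOn.card_inter_le_finrank_span S

theorem exists_isBasisIndex_card_inter_lt_finrank (hU : span ℝ (Set.range U) = ⊤)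
    (S : Finset (Fin m)) (hS : span ℝ (U '' S) ⊓ span ℝ (U '' ↑Sᶜ) ≠ ⊥) :
    ∃ B, IsBasisIndex U B ∧ (S ∩ B).card < finrank ℝ (span ℝ (U '' S)) := by
  obtain ⟨T, hTS, hT, hTcard⟩ := exists_linearIndepOn_subset_card_eq_finrank (K := ℝ) U Sᶜ
  obtain ⟨B, hTB, hB⟩ := exists_isBasisIndex_superset hU hT
  refine ⟨B, hB, ?_⟩
  have hdim := finrank_lt_finrank_span_add_finrank_span_compl hU S hS
  have hTle : T.card ≤ (B \ S).card :=
    Finset.card_le_card fun i hi => Finset.mem_sdiff.mpr ⟨hTB hi, Finset.mem_compl.mp (hTS hi)⟩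
  have hsplit : (B ∩ S).card + (B \ S).card = n := hB.1 ▸ Finset.card_inter_add_card_sdiff B S
  rw [finrank_euclideanSpace_fin] at hdim
  rw [Finset.inter_comm]
  omega

end BasisIndex

theorem stmt_4_general (n m : ℕ) (hn : 0 < n) (U : Fin m → EuclideanSpace ℝ (Fin n))
    (hpos : PosSpanning U)
    (S : Finset (Fin m))
    (hnonsep : Submodule.span ℝ (U '' ↑S) ⊓ Submodule.span ℝ (U '' ↑Sᶜ) ≠ ⊥) :
    (∃ B : Finset (Fin m), IsBasisIndex U B ∧
        (S ∩ B).card < finrank ℝ (Submodule.span ℝ (U '' ↑S))) ∧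
      ∀ γ ∈ intrinsicInterior ℝ ((n : ℝ)⁻¹ • matroidPolytope U),
        ∑ i ∈ S, γ i < (finrank ℝ (Submodule.span ℝ (U '' ↑S)) : ℝ) / n := by
  obtain ⟨B, hB, hlt⟩ :=
    exists_isBasisIndex_card_inter_lt_finrank hpos.span_range_eq_top S hnonsep
  refine ⟨⟨B, hB, hlt⟩, fun γ hγ => ?_⟩
  let f : (Fin m → ℝ) →ₗ[ℝ] ℝ := ∑ i ∈ S, LinearMap.proj i
  have hf : ∀ x, f x = ∑ i ∈ S, x i := fun x => by simp [f]
  have hn' : (0 : ℝ) < n := Nat.cast_pos.mpr hn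
  have hle : ∀ x ∈ (n : ℝ)⁻¹ • matroidPolytope U,
      f x ≤ (finrank ℝ (span ℝ (U '' S)) : ℝ) / n := by
    rintro _ ⟨y, hy, rfl⟩
    rw [_root_.map_smul, hf, smul_eq_mul, inv_mul_eq_div]
    exact div_le_div_of_nonneg_right (sum_le_finrank_of_mem_matroidPolytope S hy) hn'.le
  have hBmem : (n : ℝ)⁻¹ • (fun j => if j ∈ B then (1 : ℝ) else 0) ∈
      (n : ℝ)⁻¹ • matroidPolytope U :=
    Set.smul_mem_smul_set (subset_convexHull _ _ ⟨B, hB, rfl⟩)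
  have hBlt : f ((n : ℝ)⁻¹ • fun j => if j ∈ B then (1 : ℝ) else 0) <
      (finrank ℝ (span ℝ (U '' S)) : ℝ) / n := by
    rw [_root_.map_smul, hf, smul_eq_mul, inv_mul_eq_div, Finset.sum_boole,
      Finset.filter_mem_eq_inter]
    exact div_lt_div_of_pos_right (by exact_mod_cast hlt) hn'
  simpa only [hf] using f.apply_lt_of_mem_intrinsicInterior hle hBmem hBlt hγ

/-- if `S` is a flat of rank `1 ≤ rk(S) ≤ n-1` which is not a separator
(`span S ∩ span (U∖S) ≠ 0`), then some basis `B` of `U` meets `S` in fewer than `rank S`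
elements; consequently every `γ` in the relative interior of `(1/n)·P(M_U)` satisfies
`∑_{i ∈ S} γᵢ < rank(S)/n`. -/
theorem stmt_4 (n m : ℕ) (hn : 0 < n) (U : Fin m → EuclideanSpace ℝ (Fin n))
    (hunit : ∀ i, ‖U i‖ = 1) (hpos : PosSpanning U) (hinj : Function.Injective U)
    (S : Finset (Fin m))
    (hr1 : 1 ≤ finrank ℝ (Submodule.span ℝ (U '' ↑S)))
    (hr2 : finrank ℝ (Submodule.span ℝ (U '' ↑S)) ≤ n - 1)
    (hflat : ∀ i, U i ∈ Submodule.span ℝ (U '' ↑S) → i ∈ S)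
    (hnonsep : Submodule.span ℝ (U '' ↑S) ⊓ Submodule.span ℝ (U '' ↑Sᶜ) ≠ ⊥) :
    (∃ B : Finset (Fin m), IsBasisIndex U B ∧
        (S ∩ B).card < finrank ℝ (Submodule.span ℝ (U '' ↑S))) ∧
      ∀ γ ∈ intrinsicInterior ℝ ((n : ℝ)⁻¹ • matroidPolytope U),
        ∑ i ∈ S, γ i < (finrank ℝ (Submodule.span ℝ (U '' ↑S)) : ℝ) / n :=
  stmt_4_general n m hn U hpos S hnonsep
end

section
/- Let U ∈ R^{n×m} have distinct unit columns positively spanning R^n and let b^{(j)} → b in R^m_{≥0} with vol(P(U,b)) > 0. Then the cone-volume vectors converge: γ(U, b^{(j)}) → γ(U, b), where γ(U,c)_i = (c_i/n)·vol_{n-1}(P(U,c) ∩ {x : ⟨u_i, x⟩ = c_i}). -/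
/-!
Slicing `P(U, c)` by the hyperplane `⟪U i, x⟫ = c i` and parametrising that hyperplane
isometrically by `ℝ^(n-1)` turns the `i`-th facet into a polyhedron `P(w, δ c)` in `ℝ^(n-1)`,
where `w k` is the image of `U k` under the adjoint of the parametrisation and `δ c` depends
linearly on `c`. So it suffices that the Haar measure of `P(w, d)` is continuous in `d`. For `d'`
near `d`, `P(w, d')` lies between `P(w, d - ε‖w‖)` and `P(w, d + ε‖w‖)`; as `ε ↓ 0` the outer
sets shrink to `P(w, d)` and the inner ones exhaust it up to finitely many hyperplanes, a null set.
Scaling the perturbation by `‖w k‖` leaves alone the rows with `w k = 0` (that is, `U k = ±U i`),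
whose constraints `0 ≤ d k` cannot be perturbed; nonnegativity of `c` keeps them satisfied.
-/

open MeasureTheory Filter
open scoped RealInnerProductSpace Topology

noncomputable section

def polyhedron {n m : ℕ} (U : Fin m → EuclideanSpace ℝ (Fin n)) (b : Fin m → ℝ) :
    Set (EuclideanSpace ℝ (Fin n)) :=
  {x | ∀ i, ⟪U i, x⟫ ≤ b i}

def coneVol {n m : ℕ} (U : Fin m → EuclideanSpace ℝ (Fin n)) (b : Fin m → ℝ) :
    Fin m → ℝ := fun i =>
  b i / n * (μH[(n : ℝ) - 1] (polyhedron U b ∩ {x | ⟪U i, x⟫ = b i})).toReal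

theorem isBounded_of_forall_bddAbove_inner {ι : Type*} [Fintype ι]
    {s : Set (EuclideanSpace ℝ ι)} (h : ∀ v, BddAbove ((⟪v, ·⟫) '' s)) :
    Bornology.IsBounded s := by
  classical
  have hcoord : Bornology.IsBounded (WithLp.ofLp '' s) := by
    refine Bornology.forall_isBounded_image_eval_iff.1 fun t => ?_
    rw [Set.image_image, isBounded_iff_bddBelow_bddAbove]
    constructor
    · obtain ⟨B, hB⟩ := h (-EuclideanSpace.single t 1)
      refine ⟨-B, ?_⟩
      rintro _ ⟨y, hy, rfl⟩
      have := hB ⟨y, hy, rfl⟩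
      simp only [inner_neg_left, EuclideanSpace.inner_single_left, map_one, one_mul] at this
      exact neg_le.mp this
    · obtain ⟨B, hB⟩ := h (EuclideanSpace.single t 1)
      refine ⟨B, ?_⟩
      rintro _ ⟨y, hy, rfl⟩
      simpa [EuclideanSpace.inner_single_left] using hB ⟨y, hy, rfl⟩
  simpa [Set.image_image] using (PiLp.lipschitzWith_toLp 2 fun _ : ι => ℝ).isBounded_image hcoord

section Polyhedron

variable {N m : ℕ} {w : Fin m → EuclideanSpace ℝ (Fin N)}

theorem isClosed_polyhedron (w : Fin m → EuclideanSpace ℝ (Fin N)) (d : Fin m → ℝ) :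
    IsClosed (polyhedron w d) := by
  simp only [polyhedron, Set.ofPred_forall]
  exact isClosed_iInter fun k => isClosed_le (continuous_const.inner continuous_id) continuous_const

theorem PosSpanning.isBounded_polyhedron (hw : PosSpanning w) (d : Fin m → ℝ) :
    Bornology.IsBounded (polyhedron w d) := by
  refine isBounded_of_forall_bddAbove_inner fun v => ?_
  obtain ⟨c, hc, rfl⟩ := hw v
  refine ⟨∑ k, c k * d k, ?_⟩
  rintro _ ⟨y, hy, rfl⟩
  simp only [sum_inner, real_inner_smul_left]
  exact Finset.sum_le_sum fun k _ => mul_le_mul_of_nonneg_left (hy k) (hc k)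

theorem PosSpanning.isCompact_polyhedron (hw : PosSpanning w) (d : Fin m → ℝ) :
    IsCompact (polyhedron w d) :=
  Metric.isCompact_of_isClosed_isBounded (isClosed_polyhedron w d) (hw.isBounded_polyhedron d)

theorem polyhedron_mono {d d' : Fin m → ℝ} (h : d ≤ d') :
    polyhedron w d ⊆ polyhedron w d' :=
  fun _ hx k => (hx k).trans (h k)

theorem polyhedron_subset_polyhedron {d d' : Fin m → ℝ} (h : ∀ k, w k ≠ 0 → d k ≤ d' k)
    (h0 : ∀ k, w k = 0 → 0 ≤ d' k) : polyhedron w d ⊆ polyhedron w d' := by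
  intro x hx k
  by_cases hk : w k = 0
  · simpa [hk] using h0 k hk
  · exact (hx k).trans (h k hk)

end Polyhedron

theorem measure_setOf_inner_eq_eq_zero {E : Type*} [NormedAddCommGroup E] [InnerProductSpace ℝ E]
    [FiniteDimensional ℝ E] [MeasurableSpace E] [BorelSpace E] (μ : Measure E)
    [μ.IsAddHaarMeasure] {v : E} (hv : v ≠ 0) (t : ℝ) : μ {x | ⟪v, x⟫ = t} = 0 := by
  let s : AffineSubspace ℝ E := (AffineSubspace.mk' t ⊥).comap (innerₛₗ ℝ v).toAffineMap
  have hs : (s : Set E) = {x | ⟪v, x⟫ = t} := by ext x; simp [s, sub_eq_zero]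
  rw [← hs]
  refine Measure.addHaar_affineSubspace μ s fun htop => hv ?_
  have h0 : (0 : E) ∈ s := htop ▸ AffineSubspace.mem_top ℝ E 0
  have hv' : v ∈ s := htop ▸ AffineSubspace.mem_top ℝ E v
  rw [← SetLike.mem_coe, hs] at h0 hv'
  simp only [Set.mem_ofPred_eq, inner_zero_right] at h0 hv'
  rwa [← h0, inner_self_eq_zero] at hv'

section Continuity

variable {N m : ℕ} {w : Fin m → EuclideanSpace ℝ (Fin N)} {d : Fin m → ℝ}

theorem iInter_polyhedron_add (w : Fin m → EuclideanSpace ℝ (Fin N)) (d : Fin m → ℝ) :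
    ⋂ i : ℕ, polyhedron w (fun k => d k + 1 / ((i : ℝ) + 1) * ‖w k‖) = polyhedron w d := by
  refine subset_antisymm (fun x hx k => ?_) (Set.subset_iInter fun i => polyhedron_mono fun k => ?_)
  · have hlim : Tendsto (fun i : ℕ => d k + 1 / ((i : ℝ) + 1) * ‖w k‖) atTop (𝓝 (d k)) := by
      simpa using (tendsto_one_div_add_atTop_nhds_zero_nat.mul_const ‖w k‖).const_add (d k)
    exact ge_of_tendsto' hlim fun i => Set.mem_iInter.1 hx i k
  · simp only [le_add_iff_nonneg_right]
    positivity

theorem eventually_mem_polyhedron_sub {x : EuclideanSpace ℝ (Fin N)} (hx : x ∈ polyhedron w d)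
    (hx' : ∀ k, w k ≠ 0 → ⟪w k, x⟫ ≠ d k) :
    ∀ᶠ i : ℕ in atTop, x ∈ polyhedron w (fun k => d k - 1 / ((i : ℝ) + 1) * ‖w k‖) := by
  simp only [polyhedron, Set.mem_ofPred_eq, eventually_all]
  intro k
  by_cases hk : w k = 0
  · exact Eventually.of_forall fun _ => by simpa [hk] using hx k
  · have hlim : Tendsto (fun i : ℕ => d k - 1 / ((i : ℝ) + 1) * ‖w k‖) atTop (𝓝 (d k)) := by
      simpa using (tendsto_one_div_add_atTop_nhds_zero_nat.mul_const ‖w k‖).const_sub (d k)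
    exact hlim.eventually (eventually_ge_nhds ((hx k).lt_of_ne (hx' k hk)))

theorem measure_iUnion_polyhedron_sub (μ : Measure (EuclideanSpace ℝ (Fin N)))
    [μ.IsAddHaarMeasure] (w : Fin m → EuclideanSpace ℝ (Fin N)) (d : Fin m → ℝ) :
    μ (⋃ i : ℕ, polyhedron w (fun k => d k - 1 / ((i : ℝ) + 1) * ‖w k‖)) =
      μ (polyhedron w d) := by
  refine le_antisymm (measure_mono (Set.iUnion_subset fun i => polyhedron_mono fun k => ?_)) ?_
  · simp only [tsub_le_iff_right, le_add_iff_nonneg_right]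
    positivity
  set Z := ⋃ k, ⋃ (_ : w k ≠ 0), {x | ⟪w k, x⟫ = d k}
  have hZ : μ Z = 0 :=
    measure_iUnion_null fun k => measure_iUnion_null fun hk => measure_setOf_inner_eq_eq_zero μ hk _
  have hcover : polyhedron w d ⊆
      (⋃ i : ℕ, polyhedron w (fun k => d k - 1 / ((i : ℝ) + 1) * ‖w k‖)) ∪ Z := by
    intro x hx
    by_cases hxZ : x ∈ Z
    · exact Or.inr hxZ
    · simp only [Z, Set.mem_iUnion, Set.mem_ofPred_eq, not_exists] at hxZ
      exact Or.inl (Set.mem_iUnion.2 (eventually_mem_polyhedron_sub hx hxZ).exists)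
  calc μ (polyhedron w d) ≤ μ (_ ∪ Z) := measure_mono hcover
    _ ≤ _ := measure_union_le _ _
    _ = _ := by rw [hZ, add_zero]

theorem eventually_polyhedron_sub_subset {dseq : ℕ → Fin m → ℝ} (hd : Tendsto dseq atTop (𝓝 d))
    (hzero : ∀ k, w k = 0 → ∀ j, 0 ≤ dseq j k) {ε : ℝ} (hε : 0 < ε) :
    ∀ᶠ j in atTop, polyhedron w (fun k => d k - ε * ‖w k‖) ⊆ polyhedron w (dseq j) := by
  have h : ∀ᶠ j in atTop, ∀ k, w k ≠ 0 → d k - ε * ‖w k‖ ≤ dseq j k := by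
    refine eventually_all.2 fun k => ?_
    by_cases hk : w k = 0
    · simp [hk]
    · have : d k - ε * ‖w k‖ < d k := sub_lt_self _ (mul_pos hε (norm_pos_iff.2 hk))
      filter_upwards [(tendsto_pi_nhds.1 hd k).eventually (eventually_ge_nhds this)] with j hj
      exact fun _ => hj
  filter_upwards [h] with j hj using polyhedron_subset_polyhedron hj fun k hk => hzero k hk j

theorem eventually_polyhedron_subset_add {dseq : ℕ → Fin m → ℝ} (hd : Tendsto dseq atTop (𝓝 d))
    (hzero : ∀ k, w k = 0 → 0 ≤ d k) {ε : ℝ} (hε : 0 < ε) :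
    ∀ᶠ j in atTop, polyhedron w (dseq j) ⊆ polyhedron w (fun k => d k + ε * ‖w k‖) := by
  have h : ∀ᶠ j in atTop, ∀ k, w k ≠ 0 → dseq j k ≤ d k + ε * ‖w k‖ := by
    refine eventually_all.2 fun k => ?_
    by_cases hk : w k = 0
    · simp [hk]
    · have : d k < d k + ε * ‖w k‖ := lt_add_of_pos_right _ (mul_pos hε (norm_pos_iff.2 hk))
      filter_upwards [(tendsto_pi_nhds.1 hd k).eventually (eventually_le_nhds this)] with j hj
      exact fun _ => hj
  filter_upwards [h] with j hj using
    polyhedron_subset_polyhedron hj fun k hk => by simp [hk, hzero k hk]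

theorem tendsto_measure_polyhedron (μ : Measure (EuclideanSpace ℝ (Fin N))) [μ.IsAddHaarMeasure]
    (hw : PosSpanning w) {dseq : ℕ → Fin m → ℝ} (hd : Tendsto dseq atTop (𝓝 d))
    (hzero : ∀ k, w k = 0 → ∀ j, 0 ≤ dseq j k) :
    Tendsto (fun j => μ (polyhedron w (dseq j))) atTop (𝓝 (μ (polyhedron w d))) := by
  have hd0 : ∀ k, w k = 0 → 0 ≤ d k := fun k hk =>
    ge_of_tendsto' (tendsto_pi_nhds.1 hd k) (hzero k hk)
  have hε : ∀ i : ℕ, 0 < 1 / ((i : ℝ) + 1) := fun i => by positivity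
  have hanti : Antitone fun i : ℕ => 1 / ((i : ℝ) + 1) := fun i j hij => by dsimp only; gcongr
  have hlower : Tendsto (fun i : ℕ => μ (polyhedron w fun k => d k - 1 / ((i : ℝ) + 1) * ‖w k‖))
      atTop (𝓝 (μ (polyhedron w d))) := by
    rw [← measure_iUnion_polyhedron_sub μ w d]
    exact tendsto_measure_iUnion_atTop fun i j hij => polyhedron_mono fun k =>
      sub_le_sub_left (mul_le_mul_of_nonneg_right (hanti hij) (norm_nonneg _)) _
  have hupper : Tendsto (fun i : ℕ => μ (polyhedron w fun k => d k + 1 / ((i : ℝ) + 1) * ‖w k‖))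
      atTop (𝓝 (μ (polyhedron w d))) := by
    rw [← iInter_polyhedron_add w d]
    exact tendsto_measure_iInter_atTop
      (fun i => (isClosed_polyhedron w _).measurableSet.nullMeasurableSet)
      (fun i j hij => polyhedron_mono fun k =>
        add_le_add_right (mul_le_mul_of_nonneg_right (hanti hij) (norm_nonneg _)) _)
      ⟨0, (hw.isCompact_polyhedron _).measure_lt_top.ne⟩
  refine tendsto_order.2 ⟨fun a ha => ?_, fun a ha => ?_⟩
  · obtain ⟨i, hi⟩ := (hlower.eventually (lt_mem_nhds ha)).exists
    filter_upwards [eventually_polyhedron_sub_subset hd hzero (hε i)] with j hj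
    exact hi.trans_le (measure_mono hj)
  · obtain ⟨i, hi⟩ := (hupper.eventually (gt_mem_nhds ha)).exists
    filter_upwards [eventually_polyhedron_subset_add hd hd0 (hε i)] with j hj
    exact (measure_mono hj).trans_lt hi

end Continuity

theorem PosSpanning.map {n N m : ℕ} {U : Fin m → EuclideanSpace ℝ (Fin n)} (hU : PosSpanning U)
    (f : EuclideanSpace ℝ (Fin n) →ₗ[ℝ] EuclideanSpace ℝ (Fin N)) (hf : Function.Surjective f) :
    PosSpanning fun k => f (U k) := by
  intro y
  obtain ⟨x, rfl⟩ := hf y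
  obtain ⟨c, hc, rfl⟩ := hU x
  exact ⟨c, hc, by simp⟩

theorem exists_linearIsometry_range_eq_orthogonal {N : ℕ} {u : EuclideanSpace ℝ (Fin (N + 1))}
    (hu : u ≠ 0) : ∃ L : EuclideanSpace ℝ (Fin N) →ₗᵢ[ℝ] EuclideanSpace ℝ (Fin (N + 1)),
      LinearMap.range L.toLinearMap = (ℝ ∙ u)ᗮ := by
  have : Fact (Module.finrank ℝ (EuclideanSpace ℝ (Fin (N + 1))) = N + 1) := ⟨by simp⟩
  let e := (OrthonormalBasis.fromOrthogonalSpanSingleton (𝕜 := ℝ) N hu).repr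
  refine ⟨(ℝ ∙ u)ᗮ.subtypeₗᵢ.comp e.symm.toLinearIsometry, ?_⟩
  change LinearMap.range ((ℝ ∙ u)ᗮ.subtype ∘ₗ e.symm.toLinearEquiv.toLinearMap) = _
  rw [LinearMap.range_comp_of_range_eq_top _ (LinearEquiv.range _), Submodule.range_subtype]

section Adjoint

variable {E F : Type*} [NormedAddCommGroup E] [InnerProductSpace ℝ E] [FiniteDimensional ℝ E]
  [NormedAddCommGroup F] [InnerProductSpace ℝ F] [FiniteDimensional ℝ F] (L : E →ₗᵢ[ℝ] F)

theorem LinearIsometry.surjective_adjoint : Function.Surjective L.toLinearMap.adjoint :=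
  Function.LeftInverse.surjective fun y => LinearMap.congr_fun L.adjoint_comp_self' y

theorem eq_or_eq_neg_of_adjoint_apply_eq_zero {u : F}
    (hL : LinearMap.range L.toLinearMap = (ℝ ∙ u)ᗮ) (hu : ‖u‖ = 1) {v : F} (hv : ‖v‖ = 1)
    (h : L.toLinearMap.adjoint v = 0) : v = u ∨ v = -u := by
  have hmem : v ∈ ℝ ∙ u := by
    rw [← Submodule.orthogonal_orthogonal (ℝ ∙ u), ← hL, LinearMap.orthogonal_range]
    exact h
  obtain ⟨a, rfl⟩ := Submodule.mem_span_singleton.1 hmem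
  rw [norm_smul, hu, mul_one, Real.norm_eq_abs] at hv
  rcases (abs_eq zero_le_one).1 hv with rfl | rfl
  · simp
  · simp

end Adjoint

section Facet

variable {n N m : ℕ} (L : EuclideanSpace ℝ (Fin N) →ₗᵢ[ℝ] EuclideanSpace ℝ (Fin n))
  {u : EuclideanSpace ℝ (Fin n)}

theorem polyhedron_inter_hyperplane_eq_image (hL : LinearMap.range L.toLinearMap = (ℝ ∙ u)ᗮ)
    (hu : ‖u‖ = 1) (U : Fin m → EuclideanSpace ℝ (Fin n)) (c : Fin m → ℝ) (t : ℝ) :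
    polyhedron U c ∩ {x | ⟪u, x⟫ = t} =
      (fun y => L y + t • u) '' polyhedron (fun k => L.toLinearMap.adjoint (U k))
        (fun k => c k - t * ⟪U k, u⟫) := by
  have huu : ⟪u, u⟫ = 1 := by rw [real_inner_self_eq_norm_sq, hu, one_pow]
  have hLu : ∀ y, ⟪u, L y⟫ = 0 := fun y => by
    have : L y ∈ (ℝ ∙ u)ᗮ := hL ▸ LinearMap.mem_range_self _ y
    exact Submodule.mem_orthogonal_singleton_iff_inner_right.1 this
  have hinner : ∀ k y, ⟪U k, L y + t • u⟫ = ⟪L.toLinearMap.adjoint (U k), y⟫ + t * ⟪U k, u⟫ :=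
    fun k y => by rw [inner_add_right, real_inner_smul_right, LinearMap.adjoint_inner_left]; rfl
  ext x
  constructor
  · rintro ⟨hx, hxt : ⟪u, x⟫ = t⟩
    have : x - t • u ∈ LinearMap.range L.toLinearMap := by
      rw [hL, Submodule.mem_orthogonal_singleton_iff_inner_right, inner_sub_right,
        real_inner_smul_right, huu, hxt, mul_one, sub_self]
    obtain ⟨y, hy⟩ := this
    have hxy : L y + t • u = x := by
      rw [LinearIsometry.coe_toLinearMap] at hy
      rw [hy, sub_add_cancel]
    refine ⟨y, fun k => ?_, hxy⟩
    have := hinner k y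
    rw [hxy] at this
    linarith [hx k]
  · rintro ⟨y, hy, rfl⟩
    refine ⟨fun k => ?_, ?_⟩
    · rw [hinner]
      linarith [hy k]
    · change ⟪u, L y + t • u⟫ = t
      rw [inner_add_right, hLu, real_inner_smul_right, huu, mul_one, zero_add]

theorem hausdorffMeasure_polyhedron_inter_hyperplane
    (hL : LinearMap.range L.toLinearMap = (ℝ ∙ u)ᗮ) (hu : ‖u‖ = 1)
    (U : Fin m → EuclideanSpace ℝ (Fin n)) (c : Fin m → ℝ) (t : ℝ) {s : ℝ} (hs : 0 ≤ s) :
    μH[s] (polyhedron U c ∩ {x | ⟪u, x⟫ = t}) =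
      μH[s] (polyhedron (fun k => L.toLinearMap.adjoint (U k)) (fun k => c k - t * ⟪U k, u⟫)) := by
  rw [polyhedron_inter_hyperplane_eq_image L hL hu]
  exact ((IsometryEquiv.addRight (t • u)).isometry.comp L.isometry).hausdorffMeasure_image
    (Or.inl hs) _

end Facet

theorem stmt_13_general (n m : ℕ) (hn : 0 < n) (U : Fin m → EuclideanSpace ℝ (Fin n))
    (hunit : ∀ i, ‖U i‖ = 1) (hinj : Function.Injective U) (hpos : PosSpanning U)
    (bseq : ℕ → Fin m → ℝ) (b : Fin m → ℝ)
    (hseq : ∀ j i, 0 ≤ bseq j i)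
    (htend : Tendsto bseq atTop (𝓝 b)) :
    Tendsto (fun j => coneVol U (bseq j)) atTop (𝓝 (coneVol U b)) := by
  obtain ⟨N, rfl⟩ : ∃ N, n = N + 1 := ⟨n - 1, by omega⟩
  refine tendsto_pi_nhds.2 fun i => ?_
  obtain ⟨L, hL⟩ := exists_linearIsometry_range_eq_orthogonal (u := U i)
    (norm_ne_zero_iff.1 (by simp [hunit i]))
  set w := fun k => L.toLinearMap.adjoint (U k)
  set δ : (Fin m → ℝ) → Fin m → ℝ := fun c k => c k - c i * ⟪U k, U i⟫
  have hcone : ∀ c, coneVol U c i = c i / (N + 1 : ℕ) * (μH[N] (polyhedron w (δ c))).toReal :=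
    fun c => by
      rw [coneVol, hausdorffMeasure_polyhedron_inter_hyperplane L hL (hunit i) U c (c i)
        (by simp), Nat.cast_add_one, add_sub_cancel_right]
  have hzero : ∀ k, w k = 0 → ∀ j, 0 ≤ δ (bseq j) k := by
    intro k hk j
    have huu : ⟪U i, U i⟫ = 1 := by rw [real_inner_self_eq_norm_sq, hunit i, one_pow]
    rcases eq_or_eq_neg_of_adjoint_apply_eq_zero L hL (hunit i) (hunit k) hk with h | h
    · obtain rfl := hinj h
      simp only [δ, huu, mul_one, sub_self, le_refl]
    · simp only [δ, h, inner_neg_left, huu]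
      linarith [hseq j k, hseq j i]
  have hδ : Tendsto (fun j => δ (bseq j)) atTop (𝓝 (δ b)) :=
    ((show Continuous δ by fun_prop).tendsto b).comp htend
  have hw : PosSpanning w := hpos.map _ L.surjective_adjoint
  simp only [hcone]
  exact ((tendsto_pi_nhds.1 htend i).div_const _).mul
    ((ENNReal.tendsto_toReal (hw.isCompact_polyhedron _).measure_lt_top.ne).comp
      (tendsto_measure_polyhedron μH[N] hw hδ hzero))

/-- continuity of cone-volume vectors: if `b⁽ʲ⁾ → b` in `ℝ^m_{≥0}` and
`vol(P(U,b)) > 0`, then `γ(U, b⁽ʲ⁾) → γ(U, b)`. -/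
theorem stmt_13 (n m : ℕ) (hn : 0 < n) (U : Fin m → EuclideanSpace ℝ (Fin n))
    (hunit : ∀ i, ‖U i‖ = 1) (hinj : Function.Injective U) (hpos : PosSpanning U)
    (bseq : ℕ → Fin m → ℝ) (b : Fin m → ℝ)
    (hseq : ∀ j i, 0 ≤ bseq j i) (hbnn : ∀ i, 0 ≤ b i)
    (htend : Tendsto bseq atTop (𝓝 b))
    (hvol : 0 < volume (polyhedron U b)) :
    Tendsto (fun j => coneVol U (bseq j)) atTop (𝓝 (coneVol U b)) :=
  stmt_13_general n m hn U hunit hinj hpos bseq b hseq htend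
end
end

section
/- Let U ∈ U(2,4) give a trapezoid: u_1 = e_2 = −u_3, u_2 = (−1,−a_2)/ℓ_2, u_4 = (1,a_4)/ℓ_4 with a_4 > 0 > a_2, ℓ_2 = ‖(−1,−a_2)‖, ℓ_4 = ‖(1,a_4)‖. For b ∈ R^4_{>0}, the polygon P(U,b) is a 2-dimensional quadrilateral (all four constraints define edges) if and only if ℓ_2 b_2 + ℓ_4 b_4 > (a_4 − a_2) b_1. -/
/-- for the trapezoid normals `u₁ = e₂ = -u₃`, `u₂ = (-1,-a₂)/ℓ₂`,
`u₄ = (1,a₄)/ℓ₄` with `a₄ > 0 > a₂`, and `b ∈ ℝ⁴_{>0}`, all four constraints of `P(U,b)`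
define edges (each face `Fᵢ` contains two distinct points) iff
`ℓ₂b₂ + ℓ₄b₄ > (a₄ - a₂)b₁`. -/
theorem stmt_14 (a2 a4 l2 l4 : ℝ) (ha2 : a2 < 0) (ha4 : 0 < a4)
    (hl2 : l2 = Real.sqrt (1 + a2 ^ 2)) (hl4 : l4 = Real.sqrt (1 + a4 ^ 2))
    (b : Fin 4 → ℝ) (hb : ∀ i, 0 < b i)
    (u : Fin 4 → Fin 2 → ℝ)
    (hu : u = ![![0, 1], l2⁻¹ • ![-1, -a2], ![0, -1], l4⁻¹ • ![1, a4]]) :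
    (∀ i : Fin 4, ∃ x ∈ {x : Fin 2 → ℝ | ∀ j, u j 0 * x 0 + u j 1 * x 1 ≤ b j},
        ∃ y ∈ {x : Fin 2 → ℝ | ∀ j, u j 0 * x 0 + u j 1 * x 1 ≤ b j},
          x ≠ y ∧ u i 0 * x 0 + u i 1 * x 1 = b i ∧ u i 0 * y 0 + u i 1 * y 1 = b i) ↔
      (a4 - a2) * b 0 < l2 * b 1 + l4 * b 3 := by
  have hl2' : 0 < l2 := by rw [hl2]; positivity
  have hl4' : 0 < l4 := by rw [hl4]; positivity
  have hb0 := hb 0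
  have hb1 := hb 1
  have hb2 := hb 2
  have hb3 := hb 3
  have hl2b1 : 0 < l2 * b 1 := mul_pos hl2' hb1
  have hl4b3 : 0 < l4 * b 3 := mul_pos hl4' hb3
  have ha2b2 : a2 * b 2 < 0 := mul_neg_of_neg_of_pos ha2 hb2
  have ha4b2 : 0 < a4 * b 2 := mul_pos ha4 hb2
  subst hu
  simp only [Set.mem_setOf_eq]
  have hmem : ∀ p q : ℝ, -p - a2 * q ≤ l2 * b 1 → q ≤ b 0 → -q ≤ b 2 →
      p + a4 * q ≤ l4 * b 3 →
      ∀ j : Fin 4,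
        ![![0, 1], l2⁻¹ • ![-1, -a2], ![0, -1], l4⁻¹ • ![1, a4]] j 0 * (![p, q]) 0 +
          ![![0, 1], l2⁻¹ • ![-1, -a2], ![0, -1], l4⁻¹ • ![1, a4]] j 1 * (![p, q]) 1 ≤ b j := by
    intro p q A T Bo C j
    have e2 : l2⁻¹ * (l2 * b 1) = b 1 := inv_mul_cancel_left₀ hl2'.ne' _
    have e4 : l4⁻¹ * (l4 * b 3) = b 3 := inv_mul_cancel_left₀ hl4'.ne' _
    have hA := mul_le_mul_of_nonneg_left A (inv_nonneg.mpr hl2'.le)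
    have hC := mul_le_mul_of_nonneg_left C (inv_nonneg.mpr hl4'.le)
    fin_cases j <;> simp
    · exact T
    · nlinarith [hA, e2]
    · exact Bo
    · nlinarith [hC, e4]
  constructor
  · intro h
    obtain ⟨x, hx, y, hy, hxy, hx0, hy0⟩ := h 0
    simp at hx0 hy0
    have h1x := hx 1
    have h3x := hx 3
    have h1y := hy 1
    have h3y := hy 3
    simp at h1x h3x h1y h3y
    have A : -x 0 ≤ l2 * b 1 + a2 * x 1 := by
      have h := mul_le_mul_of_nonneg_left h1x hl2'.le
      rw [mul_add, mul_neg, ← mul_assoc, ← mul_assoc, mul_inv_cancel₀ hl2'.ne',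
        mul_inv_cancel_left₀ hl2'.ne'] at h
      linarith
    have Ay : -y 0 ≤ l2 * b 1 + a2 * y 1 := by
      have h := mul_le_mul_of_nonneg_left h1y hl2'.le
      rw [mul_add, mul_neg, ← mul_assoc, ← mul_assoc, mul_inv_cancel₀ hl2'.ne',
        mul_inv_cancel_left₀ hl2'.ne'] at h
      linarith
    have C : x 0 + a4 * x 1 ≤ l4 * b 3 := by
      have h := mul_le_mul_of_nonneg_left h3x hl4'.le
      rw [mul_add, ← mul_assoc, ← mul_assoc, mul_inv_cancel₀ hl4'.ne',
        mul_inv_cancel_left₀ hl4'.ne'] at h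
      linarith
    have Cy : y 0 + a4 * y 1 ≤ l4 * b 3 := by
      have h := mul_le_mul_of_nonneg_left h3y hl4'.le
      rw [mul_add, ← mul_assoc, ← mul_assoc, mul_inv_cancel₀ hl4'.ne',
        mul_inv_cancel_left₀ hl4'.ne'] at h
      linarith
    have hne : x 0 ≠ y 0 := by
      intro he
      apply hxy
      funext i
      fin_cases i
      · exact he
      · simpa [hy0] using hx0
    rcases lt_or_gt_of_ne hne with hlt | hgt
    · nlinarith [A, Cy]
    · nlinarith [Ay, C]
  · intro key i
    fin_cases i
    · -- top edge y = b 0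
      refine ⟨![-a2 * b 0 - l2 * b 1, b 0], ?_, ![l4 * b 3 - a4 * b 0, b 0], ?_, ?_, ?_, ?_⟩
      · exact hmem _ _ (by linarith) le_rfl (by linarith) (by linarith)
      · exact hmem _ _ (by linarith) le_rfl (by linarith) (by linarith)
      · intro he
        have := congrFun he 0
        simp at this
        linarith
      · simp [Matrix.vecHead, Matrix.vecTail] <;> (field_simp; try ring)
      · simp [Matrix.vecHead, Matrix.vecTail] <;> (field_simp; try ring)
    · -- left edge
      refine ⟨![-(l2 * b 1), 0], ?_, ![a2 * b 2 - l2 * b 1, -b 2], ?_, ?_, ?_, ?_⟩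
      · exact hmem _ _ (by linarith) (by linarith) (by linarith) (by linarith)
      · exact hmem _ _ (by linarith) (by linarith) (by linarith) (by linarith)
      · intro he
        have := congrFun he 1
        simp at this
        linarith
      · simp [Matrix.vecHead, Matrix.vecTail] <;> (field_simp; try ring)
      · simp [Matrix.vecHead, Matrix.vecTail] <;> (field_simp; try ring)
    · -- bottom edge y = -b 2
      refine ⟨![a2 * b 2 - l2 * b 1, -b 2], ?_, ![l4 * b 3 + a4 * b 2, -b 2], ?_, ?_, ?_, ?_⟩
      · exact hmem _ _ (by linarith) (by linarith) (by linarith) (by linarith)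
      · exact hmem _ _ (by linarith) (by linarith) (by linarith) (by linarith)
      · intro he
        have := congrFun he 0
        simp at this
        linarith
      · simp
      · simp
    · -- right edge
      refine ⟨![l4 * b 3, 0], ?_, ![l4 * b 3 + a4 * b 2, -b 2], ?_, ?_, ?_, ?_⟩
      · exact hmem _ _ (by linarith) (by linarith) (by linarith) (by linarith)
      · exact hmem _ _ (by linarith) (by linarith) (by linarith) (by linarith)
      · intro he
        have := congrFun he 1
        simp at this
        linarith
      · simp [Matrix.vecHead, Matrix.vecTail, inv_mul_cancel_left₀ hl4'.ne', mul_add]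
      · simp [Matrix.vecHead, Matrix.vecTail, mul_add, mul_sub, mul_neg,
          inv_mul_cancel_left₀ hl4'.ne'] <;> ring_nf <;>
          field_simp
end

section
/- Let U ∈ R^{n×m} have distinct unit columns positively spanning R^n, let U = S_1 ∪ ... ∪ S_d be its unique partition into irreducible sets, and let γ ∈ C_cv(U) ∩ R^m_{>0}. Then the solution set S(U,γ) = {b ∈ R^m_{≥0} : γ(U,b) = γ} has (semialgebraic) dimension at least d − 1; in particular, if d ≥ 2 then S(U,γ) is infinite. Concretely, if b = (b_{S_d}, b_V) ∈ S(U,γ) with V = U ∖ S_d, then for every λ > 0 the vector b_λ = (λ b_{S_d}, λ^{−k/(n−k)} b_V), where k = rank(S_d), also lies in S(U,γ). -/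
open MeasureTheory Module
open scoped RealInnerProductSpace

noncomputable section

/-- The solution set `S(U,γ)` of right-hand sides yielding cone-volume vector `γ`. -/
def solSet {n m : ℕ} (U : Fin m → EuclideanSpace ℝ (Fin n)) (γ : Fin m → ℝ) :
    Set (Fin m → ℝ) :=
  {c | (∀ i, 0 ≤ c i) ∧ coneVol U c = γ}

/-! If `span (U '' S)` and `span (U '' Sᶜ)` are complementary, the adjoint `T` of the map acting
as `a₁` on the first and as `a₂` on the second satisfies `⟪U i, T x⟫ = w i * ⟪U i, x⟫`, with
`w i = a₁` on `S` and `a₂` off `S`. Hence `T` maps `P(U, b)` onto `P(U, w * b)`, facet onto facet.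
A facet with normal `U i` has its area multiplied by `|det T| / w i` while its height is multiplied
by `w i`, so all cone volumes get multiplied by `|det T| = a₁ ^ k * a₂ ^ (n - k)`, which is `1` for
`a₁ = λ`, `a₂ = λ ^ (-k / (n - k))`. Distinct `λ` give distinct solutions since `b i ≠ 0` for
`i ∈ S` whenever the `i`-th cone volume is positive. -/

namespace LinearMap

variable {V : Type*} [AddCommGroup V] [Module ℝ V] [FiniteDimensional ℝ V]

theorem det_ofIsCompl_smul_subtype {p q : Submodule ℝ V} (h : IsCompl p q) (a c : ℝ) :
    (ofIsCompl h (a • p.subtype) (c • q.subtype)).det = a ^ finrank ℝ p * c ^ finrank ℝ q := by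
  set e := Submodule.prodEquivOfIsCompl p q h
  have hconj : ofIsCompl h (a • p.subtype) (c • q.subtype) =
      e.toLinearMap ∘ₗ prodMap (a • id) (c • id) ∘ₗ e.symm.toLinearMap := by
    refine ofIsCompl_eq' h ?_ ?_ <;> ext x <;> simp [e]
  rw [hconj, det_conj, det_prodMap, det_smul, det_smul, det_id, det_id, mul_one, mul_one]

end LinearMap

section InnerProductSpace

variable {E : Type*} [NormedAddCommGroup E] [InnerProductSpace ℝ E]

theorem Submodule.orthogonal_span_singleton_le_comap {ν : E} {f : E →ₗ[ℝ] E} {c : ℝ}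
    (hf : ∀ x, ⟪ν, f x⟫ = c * ⟪ν, x⟫) : (ℝ ∙ ν)ᗮ ≤ (ℝ ∙ ν)ᗮ.comap f := by
  intro x hx
  rw [Submodule.mem_comap, Submodule.mem_orthogonal_singleton_iff_inner_right] at *
  rw [hf, hx, mul_zero]

variable [FiniteDimensional ℝ E]

theorem LinearMap.det_adjoint (f : E →ₗ[ℝ] E) : f.adjoint.det = f.det := by
  let b := (stdOrthonormalBasis ℝ E).toBasis
  rw [← det_toMatrix b, ← det_toMatrix b, toMatrix_adjoint, Matrix.det_conjTranspose, star_trivial]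

theorem exists_inner_map_eq_mul_of_isCompl {W₁ W₂ : Submodule ℝ E} (h : IsCompl W₁ W₂)
    (a₁ a₂ : ℝ) :
    ∃ T : E →ₗ[ℝ] E, (∀ u ∈ W₁, ∀ x, ⟪u, T x⟫ = a₁ * ⟪u, x⟫) ∧
      (∀ u ∈ W₂, ∀ x, ⟪u, T x⟫ = a₂ * ⟪u, x⟫) ∧
      T.det = a₁ ^ finrank ℝ W₁ * a₂ ^ finrank ℝ W₂ := by
  set A := LinearMap.ofIsCompl h (a₁ • W₁.subtype) (a₂ • W₂.subtype)
  refine ⟨A.adjoint, fun u hu x => ?_, fun u hu x => ?_, ?_⟩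
  · rw [LinearMap.adjoint_inner_right, LinearMap.ofIsCompl_apply_left h ⟨u, hu⟩]
    simp [real_inner_smul_left]
  · rw [LinearMap.adjoint_inner_right, LinearMap.ofIsCompl_apply_right h ⟨u, hu⟩]
    simp [real_inner_smul_left]
  · rw [LinearMap.det_adjoint, LinearMap.det_ofIsCompl_smul_subtype]

/-- `f` induces multiplication by `c` on the line `E ⧸ (ℝ ∙ ν)ᗮ`. -/
theorem LinearMap.det_eq_det_restrict_mul_of_inner {ν : E} (hν : ν ≠ 0) {f : E →ₗ[ℝ] E} {c : ℝ}
    (hf : ∀ x, ⟪ν, f x⟫ = c * ⟪ν, x⟫) :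
    f.det = (f.restrict (Submodule.orthogonal_span_singleton_le_comap hf)).det * c := by
  have hquot : (ℝ ∙ ν)ᗮ.mapQ (ℝ ∙ ν)ᗮ f (Submodule.orthogonal_span_singleton_le_comap hf) =
      c • LinearMap.id := by
    ext x
    simp only [LinearMap.coe_comp, Function.comp_apply, Submodule.mkQ_apply, Submodule.mapQ_apply]
    rw [LinearMap.smul_apply, LinearMap.id_apply, ← Submodule.Quotient.mk_smul,
      Submodule.Quotient.eq, Submodule.mem_orthogonal_singleton_iff_inner_right,
      inner_sub_right, hf, real_inner_smul_right, sub_self]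
  have hrank : finrank ℝ (E ⧸ (ℝ ∙ ν)ᗮ) = 1 := by
    have h₁ := Submodule.finrank_quotient_add_finrank (ℝ ∙ ν)ᗮ
    have h₂ := Submodule.finrank_add_finrank_orthogonal (ℝ ∙ ν)
    rw [finrank_span_singleton hν] at h₂
    omega
  rw [LinearMap.det_eq_det_mul_det (ℝ ∙ ν)ᗮ f, hquot, LinearMap.det_smul, LinearMap.det_id, hrank,
    pow_one, mul_one]

variable [MeasurableSpace E] [BorelSpace E]

theorem hausdorffMeasure_image_linearMap_of_sub_mem (K : Submodule ℝ E) {T : E →ₗ[ℝ] E}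
    (hT : K ≤ K.comap T) {s : Set E} {x₀ : E} (hs : ∀ x ∈ s, x - x₀ ∈ K) :
    μH[finrank ℝ K] (T '' s) = ENNReal.ofReal |(T.restrict hT).det| * μH[finrank ℝ K] s := by
  set t : Set K := K.subtype ⁻¹' ((· - x₀) '' s)
  have hst : s = IsometryEquiv.addRight x₀ '' (K.subtype '' t) := by
    rw [Set.image_preimage_eq_of_subset (by simpa [Set.subset_def] using hs), Set.image_image]
    simp
  have hTs : T '' s = IsometryEquiv.addRight (T x₀) '' ((T ∘ₗ K.subtype) '' t) := by
    rw [hst, Set.image_image, Set.image_image, Set.image_image]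
    simp
  have hnormDet : (T ∘ₗ K.subtype).normDet = |(T.restrict hT).det| := by
    rw [← LinearMap.normDet_eq_abs_det, ← LinearMap.normDet_codRestrict]
    rfl
  rw [hTs, hst, IsometryEquiv.hausdorffMeasure_image, IsometryEquiv.hausdorffMeasure_image,
    LinearMap.hausdorffMeasure_image, LinearMap.hausdorffMeasure_image, LinearMap.normDet_subtype,
    hnormDet, ENNReal.ofReal_one, one_mul]

theorem hausdorffMeasure_image_linearMap_of_subset_hyperplane {ν : E} {T : E →ₗ[ℝ] E} {c : ℝ}
    (hT : ∀ x, ⟪ν, T x⟫ = c * ⟪ν, x⟫) {s : Set E} {d : ℝ} (hs : ∀ x ∈ s, ⟪ν, x⟫ = d) :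
    μH[finrank ℝ (ℝ ∙ ν)ᗮ] (T '' s) =
      ENNReal.ofReal |(T.restrict (Submodule.orthogonal_span_singleton_le_comap hT)).det| *
        μH[finrank ℝ (ℝ ∙ ν)ᗮ] s := by
  rcases s.eq_empty_or_nonempty with rfl | ⟨x₀, hx₀⟩
  · simp
  refine hausdorffMeasure_image_linearMap_of_sub_mem _ _ (x₀ := x₀) fun x hx => ?_
  rw [Submodule.mem_orthogonal_singleton_iff_inner_right, inner_sub_right, hs x hx, hs x₀ hx₀,
    sub_self]

end InnerProductSpace

section ConeVolume

variable {n m : ℕ} {U : Fin m → EuclideanSpace ℝ (Fin n)}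

theorem preimage_facet_mul {T : EuclideanSpace ℝ (Fin n) →ₗ[ℝ] EuclideanSpace ℝ (Fin n)}
    {w : Fin m → ℝ} (hw : ∀ i, 0 < w i) (hTU : ∀ i x, ⟪U i, T x⟫ = w i * ⟪U i, x⟫)
    (b : Fin m → ℝ) (i : Fin m) :
    T ⁻¹' (polyhedron U (w * b) ∩ {x | ⟪U i, x⟫ = (w * b) i}) =
      polyhedron U b ∩ {x | ⟪U i, x⟫ = b i} := by
  ext x
  simp [polyhedron, hTU, mul_le_mul_iff_right₀ (hw _), (hw i).ne']

theorem EuclideanSpace.finrank_orthogonal_span_singleton {ν : EuclideanSpace ℝ (Fin n)}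
    (hν : ν ≠ 0) :
    (finrank ℝ (ℝ ∙ ν)ᗮ : ℝ) = n - 1 := by
  have h := Submodule.finrank_add_finrank_orthogonal (ℝ ∙ ν)
  rw [finrank_span_singleton hν, finrank_euclideanSpace_fin] at h
  have h' : ((1 + finrank ℝ (ℝ ∙ ν)ᗮ : ℕ) : ℝ) = n := congrArg _ h
  push_cast at h'
  linarith

theorem coneVol_mul_eq_abs_det_smul {T : EuclideanSpace ℝ (Fin n) →ₗ[ℝ] EuclideanSpace ℝ (Fin n)}
    (hTdet : T.det ≠ 0) {w : Fin m → ℝ} (hw : ∀ i, 0 < w i)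
    (hTU : ∀ i x, ⟪U i, T x⟫ = w i * ⟪U i, x⟫) (hU : ∀ i, U i ≠ 0) (b : Fin m → ℝ) :
    coneVol U (w * b) = |T.det| • coneVol U b := by
  funext i
  have hfacet : polyhedron U (w * b) ∩ {x | ⟪U i, x⟫ = (w * b) i} =
      T '' (polyhedron U b ∩ {x | ⟪U i, x⟫ = b i}) := by
    have hsurj : Function.Surjective T := (T.equivOfDetNeZero hTdet).surjective
    rw [← preimage_facet_mul hw hTU b i, Set.image_preimage_eq _ hsurj]
  have hmeasure := hausdorffMeasure_image_linearMap_of_subset_hyperplane (hTU i)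
    (s := polyhedron U b ∩ {x | ⟪U i, x⟫ = b i}) fun x hx => hx.2
  rw [EuclideanSpace.finrank_orthogonal_span_singleton (hU i)] at hmeasure
  have hdet := LinearMap.det_eq_det_restrict_mul_of_inner (hU i) (hTU i)
  simp only [coneVol, Pi.smul_apply, smul_eq_mul]
  rw [hfacet, hmeasure, Pi.mul_apply, ENNReal.toReal_mul, ENNReal.toReal_ofReal (abs_nonneg _),
    hdet, abs_mul, abs_of_pos (hw i)]
  ring

theorem coneVol_ite_mul_eq_smul (hU : ∀ i, U i ≠ 0) {S : Finset (Fin m)}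
    (hS : IsCompl (Submodule.span ℝ (U '' ↑S)) (Submodule.span ℝ (U '' ↑Sᶜ)))
    {a₁ a₂ : ℝ} (ha₁ : 0 < a₁) (ha₂ : 0 < a₂) (b : Fin m → ℝ) :
    coneVol U (fun i => if i ∈ S then a₁ * b i else a₂ * b i) =
      (a₁ ^ finrank ℝ (Submodule.span ℝ (U '' ↑S)) *
        a₂ ^ finrank ℝ (Submodule.span ℝ (U '' ↑Sᶜ))) • coneVol U b := by
  obtain ⟨T, hT₁, hT₂, hTdet⟩ := exists_inner_map_eq_mul_of_isCompl hS a₁ a₂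
  set w : Fin m → ℝ := fun i => if i ∈ S then a₁ else a₂
  have hw : ∀ i, 0 < w i := fun i => by by_cases hi : i ∈ S <;> simp [w, hi, ha₁, ha₂]
  have hTU : ∀ i x, ⟪U i, T x⟫ = w i * ⟪U i, x⟫ := fun i x => by
    by_cases hi : i ∈ S
    · simpa [w, hi] using hT₁ _ (Submodule.subset_span ⟨i, hi, rfl⟩) x
    · simpa [w, hi] using hT₂ _ (Submodule.subset_span ⟨i, by simpa using hi, rfl⟩) x
  have hwb : (fun i => if i ∈ S then a₁ * b i else a₂ * b i) = w * b := by
    ext i; by_cases hi : i ∈ S <;> simp [w, hi]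
  rw [hwb, coneVol_mul_eq_abs_det_smul (hTdet ▸ by positivity) hw hTU hU, hTdet,
    abs_of_pos (by positivity)]

end ConeVolume

theorem PosSpanning.span_range_eq_top_s16 {n m : ℕ} {U : Fin m → EuclideanSpace ℝ (Fin n)}
    (hpos : PosSpanning U) : Submodule.span ℝ (Set.range U) = ⊤ := by
  refine Submodule.eq_top_iff'.2 fun x => ?_
  obtain ⟨c, -, rfl⟩ := hpos x
  exact Submodule.sum_mem _ fun i _ => Submodule.smul_mem _ _ (Submodule.subset_span ⟨i, rfl⟩)

theorem PosSpanning.isCompl_span_image {n m : ℕ} {U : Fin m → EuclideanSpace ℝ (Fin n)}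
    (hpos : PosSpanning U) {A : Set (Fin m)}
    (hsep : Submodule.span ℝ (U '' A) ⊓ Submodule.span ℝ (U '' Aᶜ) = ⊥) :
    IsCompl (Submodule.span ℝ (U '' A)) (Submodule.span ℝ (U '' Aᶜ)) := by
  refine ⟨disjoint_iff.2 hsep, codisjoint_iff.2 ?_⟩
  rw [← Submodule.span_union, ← Set.image_union, Set.union_compl_self, Set.image_univ,
    hpos.span_range_eq_top_s16]

theorem rpow_neg_div_sub_pow_mul_pow {lam : ℝ} (hlam : 0 < lam) {k n : ℕ} (hkn : k < n) :
    lam ^ k * (lam ^ (-(k : ℝ) / ((n : ℝ) - k))) ^ (n - k) = 1 := by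
  have hnk : (n : ℝ) - k ≠ 0 := sub_ne_zero.2 (Nat.cast_lt.2 hkn).ne'
  rw [← Real.rpow_natCast _ (n - k), ← Real.rpow_mul hlam.le, Nat.cast_sub hkn.le,
    div_mul_cancel₀ _ hnk, ← Real.rpow_natCast, ← Real.rpow_add hlam, add_neg_cancel,
    Real.rpow_zero]

theorem stmt_16_general (n m : ℕ) (U : Fin m → EuclideanSpace ℝ (Fin n))
    (hunit : ∀ i, ‖U i‖ = 1) (hpos : PosSpanning U)
    (S : Finset (Fin m)) (k : ℕ)
    (hk : k = finrank ℝ (Submodule.span ℝ (U '' ↑S)))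
    (hk1 : 1 ≤ k) (hk2 : k ≤ n - 1)
    (hsep : Submodule.span ℝ (U '' ↑S) ⊓ Submodule.span ℝ (U '' ↑Sᶜ) = ⊥)
    (γ : Fin m → ℝ) (hγpos : ∀ i, 0 < γ i)
    (b : Fin m → ℝ) (hb : ∀ i, 0 ≤ b i)
    (hγ : coneVol U b = γ) :
    (∀ lam : ℝ, 0 < lam →
        (fun i => if i ∈ S then lam * b i else lam ^ (-(k : ℝ) / ((n : ℝ) - k)) * b i) ∈
          solSet U γ) ∧
      (solSet U γ).Infinite := by
  have hkn : k < n := by omega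
  have hS : IsCompl (Submodule.span ℝ (U '' ↑S)) (Submodule.span ℝ (U '' ↑Sᶜ)) := by
    simpa only [Finset.coe_compl] using
      hpos.isCompl_span_image (A := ↑S) (by rwa [← Finset.coe_compl])
  have hrank : finrank ℝ (Submodule.span ℝ (U '' ↑Sᶜ)) = n - k := by
    have h := Submodule.finrank_add_eq_of_isCompl hS
    rw [finrank_euclideanSpace_fin, ← hk] at h
    omega
  have hU : ∀ i, U i ≠ 0 := fun i h => by simpa [h] using hunit i
  have hsol : ∀ lam : ℝ, 0 < lam →
      (fun i => if i ∈ S then lam * b i else lam ^ (-(k : ℝ) / ((n : ℝ) - k)) * b i) ∈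
        solSet U γ := fun lam hlam => by
    have ha : 0 < lam ^ (-(k : ℝ) / ((n : ℝ) - k)) := Real.rpow_pos_of_pos hlam _
    refine ⟨fun i => by dsimp only; split_ifs <;> exact mul_nonneg (by positivity) (hb i), ?_⟩
    rw [coneVol_ite_mul_eq_smul hU hS hlam ha, ← hk, hrank,
      rpow_neg_div_sub_pow_mul_pow hlam hkn, one_smul, hγ]
  refine ⟨hsol, Set.infinite_of_injOn_mapsTo ?_ hsol (Set.Ioi_infinite 0)⟩
  obtain ⟨i₀, hi₀⟩ : S.Nonempty := Finset.nonempty_iff_ne_empty.2 <| by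
    rintro rfl
    rw [Finset.coe_empty, Set.image_empty, Submodule.span_empty, finrank_bot] at hk
    omega
  have hb₀ : b i₀ ≠ 0 := fun h => (hγpos i₀).ne' (by simp [← hγ, coneVol, h])
  intro x _ y _ hxy
  simpa [hi₀, hb₀] using congrFun hxy i₀

/-- if `S` is a separator flat of rank `k` (giving a nontrivial direct-sum
decomposition of `U`), `γ ∈ C_cv(U) ∩ ℝ^m_{>0}` and `b ∈ S(U,γ)`, then for every `λ > 0` the
rescaled vector `b_λ` (scaling the `S`-coordinates of `b` by `λ` and the remaining ones by
`λ^{-k/(n-k)}`) also lies in `S(U,γ)`; in particular `S(U,γ)` is infinite. -/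
theorem stmt_16 (n m : ℕ) (hn : 0 < n) (U : Fin m → EuclideanSpace ℝ (Fin n))
    (hunit : ∀ i, ‖U i‖ = 1) (hinj : Function.Injective U) (hpos : PosSpanning U)
    (S : Finset (Fin m)) (k : ℕ)
    (hk : k = finrank ℝ (Submodule.span ℝ (U '' ↑S)))
    (hk1 : 1 ≤ k) (hk2 : k ≤ n - 1)
    (hflat : ∀ i, U i ∈ Submodule.span ℝ (U '' ↑S) → i ∈ S)
    (hsep : Submodule.span ℝ (U '' ↑S) ⊓ Submodule.span ℝ (U '' ↑Sᶜ) = ⊥)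
    (γ : Fin m → ℝ) (hγpos : ∀ i, 0 < γ i)
    (b : Fin m → ℝ) (hb : ∀ i, 0 ≤ b i)
    (hvol : volume (polyhedron U b) = 1) (hγ : coneVol U b = γ) :
    (∀ lam : ℝ, 0 < lam →
        (fun i => if i ∈ S then lam * b i else lam ^ (-(k : ℝ) / ((n : ℝ) - k)) * b i) ∈
          solSet U γ) ∧
      (solSet U γ).Infinite :=
  stmt_16_general n m U hunit hpos S k hk hk1 hk2 hsep γ hγpos b hb hγ
end
end

section
/- Let U ∈ R^{n×m} have distinct unit columns positively spanning R^n and let U = S_1 ∪ ... ∪ S_d be its unique partition into irreducible sets. Then dim P_scc(U) = m − d. In particular, if U is irreducible (d = 1, i.e., U has no separator flats), then dim P_scc(U) = m − 1, so P_scc(U) is full dimensional in the hyperplane {x : Σ x_i = 1}. -/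
open MeasureTheory Module
open scoped RealInnerProductSpace Pointwise

/-- `T` is irreducible: it admits no separator, i.e. no nonempty proper subset `S ⊆ T` with
`span S ∩ span (T∖S) = {0}`. -/
def IrreducibleIdx {n m : ℕ} (U : Fin m → EuclideanSpace ℝ (Fin n)) (T : Finset (Fin m)) :
    Prop :=
  ∀ S : Finset (Fin m), S ⊆ T → S.Nonempty → S ≠ T →
    ¬ Disjoint (Submodule.span ℝ (U '' ↑S)) (Submodule.span ℝ (U '' ↑(T \ S)))

/-!
Write `r_j` for the rank of `S_j`. Since the spans of the `S_j` decompose `ℝⁿ` as a direct sum,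
every basis contains exactly `r_j` columns of `S_j`; hence the polytope lies in the affine subspace
`{x | ∑_{i ∈ S_j} x_i = r_j for all j}`, whose direction has dimension `m - d`.
Conversely, that direction is spanned by the vectors `χ_f - χ_e` with `e, f` in one component
`T = S_j`, and each of them lies in the direction of the polytope: fix `e` and let `A ⊆ T` be the
set of `f` for which it does. If `A ≠ T`, irreducibility gives a
nonzero vector in `span A ∩ span (T \ A)`, which produces a basis `B` and an exchange
`B ↦ B - e' + f'` with `e' ∈ A`, `f' ∈ T \ A`; the difference of the two vertices is
`χ_f' - χ_e'`, so `f' ∈ A`, a contradiction.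
-/

open Finset Submodule Function

section LinearIndepOn
variable {ι K V : Type*} [Field K] [AddCommGroup V] [Module K V] {v : ι → V}

theorem LinearIndepOn.finrank_span_image_eq_card {s : Finset ι} (hs : LinearIndepOn K v ↑s) :
    finrank K (span K (v '' ↑s)) = #s := by
  rw [Set.image_eq_range, finrank_span_eq_card hs]
  simp

theorem LinearIndepOn.mem_span_image_diff {s t : Set ι} {x : V} (ht : LinearIndepOn K v t)
    (hx : x ∈ span K (v '' t)) (h : ∀ i ∈ s ∩ t, x ∈ span K (v '' (t \ {i}))) :
    x ∈ span K (v '' (t \ s)) := by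
  obtain ⟨l, hlt, rfl⟩ := (Finsupp.mem_span_image_iff_linearCombination K).1 hx
  refine (Finsupp.mem_span_image_iff_linearCombination K).2
    ⟨l, fun i hi => ⟨hlt hi, fun his => ?_⟩, rfl⟩
  obtain ⟨l', hl't, hl'⟩ :=
    (Finsupp.mem_span_image_iff_linearCombination K).1 (h i ⟨his, hlt hi⟩)
  have : l' - l = 0 := linearIndepOn_iff.1 ht _
    (sub_mem (Finsupp.supported_mono Set.sdiff_subset hl't) hlt) (by rw [map_sub, hl', sub_self])
  rw [sub_eq_zero] at this
  exact (hl't (this ▸ hi)).2 rfl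

end LinearIndepOn

theorem sum_finrank_eq_of_iSupIndep {ι K V : Type*} [Fintype ι] [Field K]
    [AddCommGroup V] [Module K V] [FiniteDimensional K V] {p : ι → Submodule K V}
    (hind : iSupIndep p) (hsup : iSup p = ⊤) : ∑ i, finrank K (p i) = finrank K V := by
  classical
  rw [← Module.finrank_directSum]
  exact (LinearEquiv.ofBijective (DirectSum.coeLinearMap p)
    (DirectSum.isInternal_submodule_of_iSupIndep_of_iSup_eq_top hind hsup)).finrank_eq

theorem vectorSpan_smul {K V : Type*} [Field K] [AddCommGroup V] [Module K V] {a : K}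
    (ha : a ≠ 0) (s : Set V) : vectorSpan K (a • s) = vectorSpan K s := by
  have h := AffineMap.map_vectorSpan (a • LinearMap.id : V →ₗ[K] V).toAffineMap (s := s)
  rw [LinearMap.toAffineMap_linear, Submodule.map_smul _ _ _ ha, map_id] at h
  rw [h, ← Set.image_smul]
  rfl

theorem vectorSpan_convexHull_le_ker {K V W : Type*} [Field K] [LinearOrder K]
    [IsStrictOrderedRing K] [AddCommGroup V] [Module K V] [AddCommGroup W] [Module K W]
    {s : Set V} {f : V →ₗ[K] W} {c : W} (hs : ∀ x ∈ s, f x = c) :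
    vectorSpan K (convexHull K s) ≤ LinearMap.ker f := by
  rw [← direction_affineSpan, affineSpan_convexHull, direction_affineSpan, vectorSpan_def,
    span_le]
  rintro _ ⟨x, hx, y, hy, rfl⟩
  simp [hs x hx, hs y hy]

section BlockSum
variable {ι R : Type*} {d : ℕ} {S : Fin d → Finset ι}

variable (S) in
def blockSum [CommSemiring R] : (ι → R) →ₗ[R] (Fin d → R) :=
  LinearMap.pi fun j => ∑ i ∈ S j, LinearMap.proj i

@[simp]
theorem blockSum_apply [CommSemiring R] (x : ι → R) (j : Fin d) :
    blockSum S x j = ∑ i ∈ S j, x i := by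
  simp [blockSum]

theorem sum_sum_blocks [Fintype ι] {M : Type*} [AddCommMonoid M]
    (hdisj : Pairwise (Disjoint on S)) (hcover : ∀ i, ∃ j, i ∈ S j) (g : ι → M) :
    ∑ j, ∑ i ∈ S j, g i = ∑ i, g i := by
  classical
  rw [← sum_biUnion (hdisj.set_pairwise _)]
  congr
  ext i
  simpa using hcover i

variable [DecidableEq ι]

theorem blockSum_single [CommSemiring R] (hdisj : Pairwise (Disjoint on S)) {i : ι} {j : Fin d}
    (hi : i ∈ S j) (a : R) : blockSum S (Pi.single i a) = Pi.single j a := by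
  ext j'
  rw [blockSum_apply, sum_pi_single', Pi.single_apply]
  congr 1
  exact propext ⟨fun h => hdisj.eq (not_disjoint_iff.2 ⟨i, h, hi⟩), fun h => h ▸ hi⟩

theorem blockSum_surjective [CommSemiring R] (hne : ∀ j, (S j).Nonempty)
    (hdisj : Pairwise (Disjoint on S)) : Surjective (blockSum (R := R) S) := by
  intro y
  refine ⟨∑ j, Pi.single (hne j).choose (y j), ?_⟩
  simp only [map_sum, blockSum_single hdisj (hne _).choose_spec, univ_sum_single]

theorem finrank_ker_blockSum [Fintype ι] {K : Type*} [Field K] (hne : ∀ j, (S j).Nonempty)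
    (hdisj : Pairwise (Disjoint on S)) :
    finrank K (LinearMap.ker (blockSum (R := K) S)) = Fintype.card ι - d := by
  have h := LinearMap.finrank_range_add_finrank_ker (blockSum (R := K) S)
  rw [LinearMap.range_eq_top.2 (blockSum_surjective hne hdisj), finrank_top,
    finrank_fintype_fun_eq_card, finrank_fintype_fun_eq_card, Fintype.card_fin] at h
  omega

theorem ker_blockSum_le [Fintype ι] [CommRing R] {V : Submodule R (ι → R)}
    (hne : ∀ j, (S j).Nonempty) (hdisj : Pairwise (Disjoint on S)) (hcover : ∀ i, ∃ j, i ∈ S j)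
    (hV : ∀ j, ∀ e ∈ S j, ∀ f ∈ S j, Pi.single f 1 - Pi.single e 1 ∈ V) :
    LinearMap.ker (blockSum S) ≤ V := by
  intro w hw
  set r : Fin d → ι := fun j => (hne j).choose
  have hblock : ∀ j, ∑ i ∈ S j, w i • (Pi.single i 1 - Pi.single (r j) 1 : ι → R) =
      ∑ i ∈ S j, w i • Pi.single i 1 := by
    intro j
    have h0 : ∑ i ∈ S j, w i = 0 := by simpa using congr_fun (LinearMap.mem_ker.1 hw) j
    simp only [smul_sub, sum_sub_distrib, ← sum_smul, h0, zero_smul, sub_zero]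
  have hw : w = ∑ j, ∑ i ∈ S j, w i • (Pi.single i 1 - Pi.single (r j) 1 : ι → R) := by
    simp only [hblock, sum_sum_blocks hdisj hcover, ← Pi.single_smul', smul_eq_mul, mul_one,
      univ_sum_single]
  rw [hw]
  exact sum_mem fun j _ => sum_mem fun i hi => smul_mem _ _ (hV j _ (hne j).choose_spec i hi)

end BlockSum

section BasisIndex
variable {n m : ℕ} {U : Fin m → EuclideanSpace ℝ (Fin n)}

theorem isBasisIndex_iff {B : Finset (Fin m)} :
    IsBasisIndex U B ↔ LinearIndepOn ℝ U ↑B ∧ span ℝ (U '' ↑B) = ⊤ := by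
  refine ⟨fun hB => ⟨?_, hB.2⟩, fun hB => ⟨?_, hB.2⟩⟩
  · apply linearIndependent_of_top_le_span_of_card_eq_finrank
    · rw [← Set.image_eq_range, hB.2]
    · simp [hB.1]
  · rw [← hB.1.finrank_span_image_eq_card, hB.2, finrank_top, finrank_euclideanSpace_fin]

theorem exists_isBasisIndex_notMem_span_erase (htop : span ℝ (Set.range U) = ⊤)
    {A A' : Finset (Fin m)} (h : ¬ Disjoint (span ℝ (U '' ↑A)) (span ℝ (U '' ↑A'))) :
    ∃ B, IsBasisIndex U B ∧ ∃ e ∈ A ∩ B, ∃ f ∈ A', U f ∉ span ℝ (U '' ↑(B.erase e)) := by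
  -- `B` extends a basis `I ⊆ A` of `span A`; without an exchange, `A'` would lie in
  -- `span (B \ A)`, which meets `span A` only in `0`.
  obtain ⟨I, hIA, -, hAI, hI⟩ :=
    exists_linearIndepOn_extension (linearIndepOn_empty ℝ U) (Set.empty_subset (A : Set _))
  obtain ⟨B, -, hIB, hBspan, hB⟩ := exists_linearIndepOn_extension hI (Set.subset_univ I)
  obtain ⟨B, rfl⟩ := B.toFinite.exists_finset_coe
  have hBtop : span ℝ (U '' ↑B) = ⊤ := by
    rw [eq_top_iff, ← htop, ← Set.image_univ]
    exact span_le.2 hBspan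
  refine ⟨B, isBasisIndex_iff.2 ⟨hB, hBtop⟩, ?_⟩
  by_contra! hcon
  apply h
  have hA : span ℝ (U '' ↑A) ≤ span ℝ (U '' (↑B ∩ ↑A)) :=
    span_le.2 (hAI.trans (span_mono (Set.image_mono (Set.subset_inter hIB hIA))))
  have hA' : span ℝ (U '' ↑A') ≤ span ℝ (U '' (↑B \ ↑A)) := by
    refine span_le.2 ?_
    rintro _ ⟨f, hf, rfl⟩
    refine hB.mem_span_image_diff (hBtop ▸ mem_top) fun e he => ?_
    simpa using hcon e (mem_inter.2 ⟨he.1, he.2⟩) f hf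
  have hBA : Disjoint (span ℝ (U '' (↑B ∩ ↑A))) (span ℝ (U '' (↑B \ ↑A))) :=
    ((linearIndepOn_union_iff Set.disjoint_sdiff_inter.symm).1
      (by rwa [Set.inter_union_sdiff])).2.2
  exact hBA.mono hA hA'

theorem IsBasisIndex.insert_erase {B : Finset (Fin m)} (hB : IsBasisIndex U B) {e f : Fin m}
    (he : e ∈ B) (hf : U f ∉ span ℝ (U '' ↑(B.erase e))) :
    IsBasisIndex U (insert f (B.erase e)) := by
  have hfB : f ∉ B.erase e := fun h => hf (subset_span (Set.mem_image_of_mem U h))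
  refine ⟨?_, ?_⟩
  · have hn : 0 < n := hB.1 ▸ card_pos.2 ⟨e, he⟩
    rw [card_insert_of_notMem hfB, card_erase_of_mem he, hB.1]
    omega
  · have hUe : U e ∈ span ℝ (insert (U f) (U '' ↑(B.erase e))) := by
      refine mem_span_insert_exchange ?_ hf
      rw [← Set.image_insert_eq, ← coe_insert, Finset.insert_erase he, hB.2]
      exact mem_top
    rw [eq_top_iff, ← hB.2, coe_insert, Set.image_insert_eq, span_le]
    rintro _ ⟨i, hi, rfl⟩
    by_cases hie : i = e
    · exact hie ▸ hUe
    · exact subset_span (Set.mem_insert_of_mem _ ⟨i, mem_erase.2 ⟨hie, hi⟩, rfl⟩)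

theorem ite_mem_insert_erase_sub_ite_mem {ι R : Type*} [DecidableEq ι] [AddGroupWithOne R]
    {B : Finset ι} {e f : ι} (he : e ∈ B) (hf : f ∉ B) :
    ((fun j => if j ∈ insert f (B.erase e) then 1 else 0) - fun j => if j ∈ B then 1 else 0) =
      (Pi.single f 1 - Pi.single e 1 : ι → R) := by
  ext j
  simp only [Pi.sub_apply, Pi.single_apply, mem_insert, mem_erase]
  split_ifs <;> simp_all

theorem IsBasisIndex.single_sub_single_mem_vectorSpan {B : Finset (Fin m)}
    (hB : IsBasisIndex U B) {e f : Fin m} (he : e ∈ B) (hf : U f ∉ span ℝ (U '' ↑(B.erase e))) :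
    Pi.single f 1 - Pi.single e 1 ∈ vectorSpan ℝ (matroidPolytope U) := by
  by_cases hfe : f = e
  · simp [hfe]
  have hfB : f ∉ B := fun h => hf (subset_span ⟨f, mem_erase.2 ⟨hfe, h⟩, rfl⟩)
  rw [← ite_mem_insert_erase_sub_ite_mem he hfB]
  exact vsub_mem_vectorSpan ℝ (subset_convexHull ℝ _ ⟨_, hB.insert_erase he hf, rfl⟩)
    (subset_convexHull ℝ _ ⟨_, hB, rfl⟩)

theorem IrreducibleIdx.single_sub_single_mem_vectorSpan (htop : span ℝ (Set.range U) = ⊤)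
    {T : Finset (Fin m)} (hT : IrreducibleIdx U T) {e f : Fin m} (he : e ∈ T) (hf : f ∈ T) :
    Pi.single f 1 - Pi.single e 1 ∈ vectorSpan ℝ (matroidPolytope U) := by
  classical
  set A := T.filter fun f => Pi.single f 1 - Pi.single e 1 ∈ vectorSpan ℝ (matroidPolytope U)
  suffices hA : A = T by
    rw [← hA] at hf
    exact (mem_filter.1 hf).2
  by_contra hAT
  have heA : e ∈ A := mem_filter.2 ⟨he, by simp⟩
  obtain ⟨B, hB, e', he', f', hf', hf'B⟩ :=
    exists_isBasisIndex_notMem_span_erase htop (hT A (filter_subset _ _) ⟨e, heA⟩ hAT)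
  rw [mem_inter] at he'
  rw [mem_sdiff] at hf'
  refine hf'.2 (mem_filter.2 ⟨hf'.1, ?_⟩)
  rw [← sub_add_sub_cancel _ (Pi.single e' 1)]
  exact add_mem (hB.single_sub_single_mem_vectorSpan he'.2 hf'B) (mem_filter.1 he'.1).2

variable {d : ℕ} {S : Fin d → Finset (Fin m)}

theorem IsBasisIndex.card_inter_eq_finrank (hdisj : Pairwise (Disjoint on S))
    (hcover : ∀ i, ∃ j, i ∈ S j) (hsum : ∑ j, finrank ℝ (span ℝ (U '' ↑(S j))) = n)
    {B : Finset (Fin m)} (hB : IsBasisIndex U B) (j : Fin d) :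
    #(S j ∩ B) = finrank ℝ (span ℝ (U '' ↑(S j))) := by
  have hle : ∀ j, #(S j ∩ B) ≤ finrank ℝ (span ℝ (U '' ↑(S j))) := fun j => by
    have hind := (isBasisIndex_iff.1 hB).1.mono (coe_subset.2 (inter_subset_right (s₁ := S j)))
    rw [← hind.finrank_span_image_eq_card]
    exact Submodule.finrank_mono (span_mono (Set.image_mono (coe_subset.2 inter_subset_left)))
  have hcard : ∑ j, #(S j ∩ B) = ∑ j, finrank ℝ (span ℝ (U '' ↑(S j))) := by
    rw [hsum, ← hB.1]
    simp only [← filter_mem_eq_inter, card_filter, sum_sum_blocks hdisj hcover]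
    simp
  exact (sum_eq_sum_iff_of_le fun j _ => hle j).1 hcard j (mem_univ j)

theorem vectorSpan_matroidPolytope_le_ker_blockSum (hdisj : Pairwise (Disjoint on S))
    (hcover : ∀ i, ∃ j, i ∈ S j) (hsum : ∑ j, finrank ℝ (span ℝ (U '' ↑(S j))) = n) :
    vectorSpan ℝ (matroidPolytope U) ≤ LinearMap.ker (blockSum S) :=
  vectorSpan_convexHull_le_ker (c := fun j => (finrank ℝ (span ℝ (U '' ↑(S j))) : ℝ)) <| by
    rintro _ ⟨B, hB, rfl⟩
    ext j
    simp [hB.card_inter_eq_finrank hdisj hcover hsum j]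

end BasisIndex

theorem stmt_18_general (n m d : ℕ) (hn : 0 < n) (U : Fin m → EuclideanSpace ℝ (Fin n))
    (S : Fin d → Finset (Fin m))
    (hne : ∀ j, (S j).Nonempty)
    (hdisj : ∀ j j', j ≠ j' → Disjoint (S j) (S j'))
    (hcover : ∀ i, ∃ j, i ∈ S j)
    (hirr : ∀ j, IrreducibleIdx U (S j))
    (hind : iSupIndep fun j => Submodule.span ℝ (U '' ↑(S j)))
    (hspan : (⨆ j, Submodule.span ℝ (U '' ↑(S j))) = ⊤) :
    finrank ℝ (vectorSpan ℝ ((n : ℝ)⁻¹ • matroidPolytope U)) = m - d := by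
  have htop : span ℝ (Set.range U) = ⊤ :=
    eq_top_iff.2 (hspan ▸ iSup_le fun j => span_mono (Set.image_subset_range _ _))
  have hsum : ∑ j, finrank ℝ (span ℝ (U '' ↑(S j))) = n := by
    rw [sum_finrank_eq_of_iSupIndep hind hspan, finrank_euclideanSpace_fin]
  have hP : vectorSpan ℝ (matroidPolytope U) = LinearMap.ker (blockSum S) :=
    le_antisymm (vectorSpan_matroidPolytope_le_ker_blockSum hdisj hcover hsum)
      (ker_blockSum_le hne hdisj hcover fun j _ he _ hf =>
        (hirr j).single_sub_single_mem_vectorSpan htop he hf)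
  rw [vectorSpan_smul (by positivity), hP, finrank_ker_blockSum hne hdisj, Fintype.card_fin]

/-- if `U = S₁ ∪ ⋯ ∪ S_d` is the partition of the columns of `U` into
irreducible sets (whose spans decompose `ℝⁿ` as a direct sum), then the dimension of
`P_scc(U) = (1/n)·P(M_U)` equals `m - d`. -/
theorem stmt_18 (n m d : ℕ) (hn : 0 < n) (U : Fin m → EuclideanSpace ℝ (Fin n))
    (hunit : ∀ i, ‖U i‖ = 1) (hinj : Function.Injective U) (hpos : PosSpanning U)
    (S : Fin d → Finset (Fin m))
    (hne : ∀ j, (S j).Nonempty)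
    (hdisj : ∀ j j', j ≠ j' → Disjoint (S j) (S j'))
    (hcover : ∀ i, ∃ j, i ∈ S j)
    (hirr : ∀ j, IrreducibleIdx U (S j))
    (hind : iSupIndep fun j => Submodule.span ℝ (U '' ↑(S j)))
    (hspan : (⨆ j, Submodule.span ℝ (U '' ↑(S j))) = ⊤) :
    finrank ℝ (vectorSpan ℝ ((n : ℝ)⁻¹ • matroidPolytope U)) = m - d :=
  stmt_18_general n m d hn U S hne hdisj hcover hirr hind hspan
end

section
/- Let U ∈ R^{n×m} have distinct unit columns positively spanning R^n. If the polytopes {(γ(U,b), b) : b ∈ R^m_{≥0}, vol(P(U,b)) = 1} form a convex subset of R^m × R^m, then m = n + 1. Key step: if there exist b, b̃ ∈ R^m_{≥0} with vol(P(U,b)) = vol(P(U,b̃)) = 1 such that P(U,b) and P(U,b̃) are not translates of each other, then vol(P(U, (b+b̃)/2)) > 1 by the equality case of the Brunn–Minkowski inequality, contradicting convexity. -/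
open MeasureTheory
open scoped RealInnerProductSpace

noncomputable section

/-!
Convexity of the unit-volume slice `{b ≥ 0 : vol P(U, b) = 1}` makes `b ↦ vol(P(U, b))^(1/n)`
additive on the positive orthant. Because `vol P(U, 1 + eⱼ) > vol P(U, 1)`, additivity bounds
`vol P(U, eⱼ + ε)` from below uniformly in `ε > 0`, so `P(U, eⱼ)` has positive volume and hence
an interior point `xⱼ`, which satisfies `⟪Uᵢ, xⱼ⟫ < 0` for all `i ≠ j`. Pairing a linear relation
`∑ μᵢ Uᵢ = 0` with these points shows that the positive relation provided by positive spanning is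
the only one up to scale, so the kernel of `μ ↦ ∑ μᵢ Uᵢ` is a line and rank–nullity gives
`m = n + 1`.
-/

open scoped Pointwise

section InnerProductSpace

variable {E : Type*} [NormedAddCommGroup E] [InnerProductSpace ℝ E]

theorem isBounded_of_forall_bddAbove_inner_s19 [FiniteDimensional ℝ E] {s : Set E}
    (h : ∀ w : E, BddAbove ((fun x => ⟪w, x⟫) '' s)) : Bornology.IsBounded s := by
  choose R hR using h
  let e := stdOrthonormalBasis ℝ E
  rw [Metric.isBounded_iff_subset_closedBall 0]
  refine ⟨∑ k, max (R (e k)) (R (-e k)), fun x hx => ?_⟩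
  have hcoord : ∀ k, |⟪e k, x⟫| ≤ max (R (e k)) (R (-e k)) := fun k => by
    have h₁ : ⟪e k, x⟫ ≤ R (e k) := hR (e k) ⟨x, hx, rfl⟩
    have h₂ : ⟪-e k, x⟫ ≤ R (-e k) := hR (-e k) ⟨x, hx, rfl⟩
    rw [inner_neg_left] at h₂
    exact abs_le.2 ⟨by linarith [le_max_right (R (e k)) (R (-e k))],
      h₁.trans (le_max_left _ _)⟩
  rw [Metric.mem_closedBall, dist_zero_right]
  calc ‖x‖ = ‖∑ k, ⟪e k, x⟫ • e k‖ := by rw [e.sum_repr']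
    _ ≤ ∑ k, ‖⟪e k, x⟫ • e k‖ := norm_sum_le _ _
    _ = ∑ k, |⟪e k, x⟫| := by simp [norm_smul, e.orthonormal.1]
    _ ≤ _ := Finset.sum_le_sum fun k _ => hcoord k

theorem Convex.interior_nonempty_of_measure_pos [FiniteDimensional ℝ E] [MeasurableSpace E]
    [BorelSpace E] (μ : Measure E) [μ.IsAddHaarMeasure] {s : Set E} (hs : Convex ℝ s)
    (h : 0 < μ s) : (interior s).Nonempty := by
  by_contra hint
  rw [hs.interior_nonempty_iff_affineSpan_eq_top] at hint
  exact h.ne' (measure_mono_null (subset_affineSpan ℝ s) (Measure.addHaar_affineSubspace μ _ hint))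

variable {ι : Type*} [Fintype ι] {U : ι → E}

theorem eq_zero_of_sum_smul_eq_zero {w : ι → ℝ} {j : ι} {x : E} (hw : ∀ i, 0 ≤ w i)
    (hwj : w j = 0) (hx : ∀ i ≠ j, ⟪U i, x⟫ < 0) (h : ∑ i, w i • U i = 0) : w = 0 := by
  have hsum : ∑ i, w i * ⟪U i, x⟫ = 0 := by
    simpa [sum_inner, real_inner_smul_left] using congrArg (⟪·, x⟫) h
  have hterm : ∀ i ∈ Finset.univ, w i * ⟪U i, x⟫ ≤ 0 := fun i _ => by
    rcases eq_or_ne i j with rfl | hij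
    · simp [hwj]
    · exact mul_nonpos_of_nonneg_of_nonpos (hw i) (hx i hij).le
  funext i
  rcases eq_or_ne i j with rfl | hij
  · exact hwj
  · have := (Finset.sum_eq_zero_iff_of_nonpos hterm).1 hsum i (Finset.mem_univ i)
    exact (mul_eq_zero.1 this).resolve_right (hx i hij).ne

theorem ker_linearCombination_le_span_singleton [Nonempty ι] {lam : ι → ℝ}
    (hlam : ∀ i, 0 < lam i) (hlamU : ∑ i, lam i • U i = 0)
    (hsep : ∀ j, ∃ x : E, ∀ i ≠ j, ⟪U i, x⟫ < 0) :
    LinearMap.ker (Fintype.linearCombination ℝ U) ≤ ℝ ∙ lam := by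
  intro μ hμ
  rw [LinearMap.mem_ker, Fintype.linearCombination_apply] at hμ
  obtain ⟨j, -, hj⟩ := Finset.exists_min_image Finset.univ (fun i => μ i / lam i)
    Finset.univ_nonempty
  obtain ⟨x, hx⟩ := hsep j
  have hw : μ - (μ j / lam j) • lam = 0 := by
    refine eq_zero_of_sum_smul_eq_zero (fun i => ?_) ?_ hx ?_
    · have := (le_div_iff₀ (hlam i)).1 (hj i (Finset.mem_univ i))
      simp only [Pi.sub_apply, Pi.smul_apply, smul_eq_mul]
      linarith
    · simp [div_mul_cancel₀ _ (hlam j).ne']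
    · simp only [Pi.sub_apply, Pi.smul_apply, smul_eq_mul, sub_smul, mul_smul,
        Finset.sum_sub_distrib, ← Finset.smul_sum, hμ, hlamU, smul_zero, sub_zero]
  exact Submodule.mem_span_singleton.2 ⟨μ j / lam j, (sub_eq_zero.1 hw).symm⟩

theorem card_eq_finrank_add_one [FiniteDimensional ℝ E] [Nonempty ι] {lam : ι → ℝ}
    (hU : Function.Surjective (Fintype.linearCombination ℝ U))
    (hlam : ∀ i, 0 < lam i) (hlamU : ∑ i, lam i • U i = 0)
    (hsep : ∀ j, ∃ x : E, ∀ i ≠ j, ⟪U i, x⟫ < 0) :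
    Fintype.card ι = Module.finrank ℝ E + 1 := by
  have hker : LinearMap.ker (Fintype.linearCombination ℝ U) = ℝ ∙ lam := by
    refine le_antisymm (ker_linearCombination_le_span_singleton hlam hlamU hsep) ?_
    rw [Submodule.span_singleton_le_iff_mem, LinearMap.mem_ker, Fintype.linearCombination_apply]
    exact hlamU
  have hlam0 : lam ≠ 0 := fun h => (hlam (Classical.arbitrary ι)).ne' (congrFun h _)
  have := LinearMap.finrank_range_add_finrank_ker (Fintype.linearCombination ℝ U)
  rw [LinearMap.range_eq_top.2 hU, finrank_top, hker, finrank_span_singleton hlam0,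
    Module.finrank_fintype_fun_eq_card] at this
  exact this.symm

end InnerProductSpace

namespace PosSpanning

variable {n m : ℕ} {U : Fin m → EuclideanSpace ℝ (Fin n)}

theorem exists_pos_sum_smul_eq_zero (hU : PosSpanning U) :
    ∃ lam : Fin m → ℝ, (∀ i, 0 < lam i) ∧ ∑ i, lam i • U i = 0 := by
  obtain ⟨c, hc, hsum⟩ := hU (-∑ i, U i)
  refine ⟨c + 1, fun i => by simp only [Pi.add_apply, Pi.one_apply]; linarith [hc i], ?_⟩
  simp only [Pi.add_apply, Pi.one_apply, add_smul, one_smul, Finset.sum_add_distrib, ← hsum,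
    neg_add_cancel]

theorem surjective_linearCombination (hU : PosSpanning U) :
    Function.Surjective (Fintype.linearCombination ℝ U) := fun x => by
  obtain ⟨c, -, hc⟩ := hU x
  exact ⟨c, by rw [Fintype.linearCombination_apply, hc]⟩

theorem le_card (hU : PosSpanning U) : n ≤ m := by
  have := LinearMap.finrank_range_le (Fintype.linearCombination ℝ U)
  rwa [LinearMap.range_eq_top.2 hU.surjective_linearCombination, finrank_top,
    finrank_euclideanSpace_fin, Module.finrank_fin_fun] at this

theorem isBounded_polyhedron_s19 (hU : PosSpanning U) (b : Fin m → ℝ) :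
    Bornology.IsBounded (polyhedron U b) := by
  refine isBounded_of_forall_bddAbove_inner_s19 fun w => ?_
  obtain ⟨c, hc, rfl⟩ := hU w
  refine ⟨∑ i, c i * b i, ?_⟩
  rintro _ ⟨x, hx, rfl⟩
  simp only [sum_inner, real_inner_smul_left]
  exact Finset.sum_le_sum fun i _ => mul_le_mul_of_nonneg_left (hx i) (hc i)

theorem volume_polyhedron_ne_top (hU : PosSpanning U) (b : Fin m → ℝ) :
    volume (polyhedron U b) ≠ ⊤ :=
  (hU.isBounded_polyhedron_s19 b).measure_lt_top.ne

end PosSpanning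

section Polyhedron

variable {n m : ℕ} {U : Fin m → EuclideanSpace ℝ (Fin n)}

theorem polyhedron_eq_iInter (U : Fin m → EuclideanSpace ℝ (Fin n)) (b : Fin m → ℝ) :
    polyhedron U b = ⋂ i, {x | ⟪U i, x⟫ ≤ b i} := by
  ext x
  simp [polyhedron]

theorem isClosed_polyhedron_s19 (U : Fin m → EuclideanSpace ℝ (Fin n)) (b : Fin m → ℝ) :
    IsClosed (polyhedron U b) := by
  rw [polyhedron_eq_iInter]
  exact isClosed_iInter fun i => isClosed_le (by fun_prop) continuous_const

theorem convex_polyhedron (U : Fin m → EuclideanSpace ℝ (Fin n)) (b : Fin m → ℝ) :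
    Convex ℝ (polyhedron U b) := by
  rw [polyhedron_eq_iInter]
  exact convex_iInter fun i => convex_halfSpace_le (innerₛₗ ℝ (U i)).isLinear _

theorem polyhedron_mono_s19 (U : Fin m → EuclideanSpace ℝ (Fin n)) :
    Monotone (polyhedron U) :=
  fun _ _ h _ hx i => (hx i).trans (h i)

theorem polyhedron_smul (U : Fin m → EuclideanSpace ℝ (Fin n)) {c : ℝ} (hc : 0 < c)
    (b : Fin m → ℝ) : polyhedron U (c • b) = c • polyhedron U b := by
  ext x
  simp only [Set.mem_smul_set_iff_inv_smul_mem₀ hc.ne', polyhedron, Set.mem_ofPred_eq,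
    real_inner_smul_right, Pi.smul_apply, smul_eq_mul, inv_mul_le_iff₀ hc]

theorem volume_polyhedron_smul (U : Fin m → EuclideanSpace ℝ (Fin n)) {c : ℝ} (hc : 0 < c)
    (b : Fin m → ℝ) :
    volume (polyhedron U (c • b)) = ENNReal.ofReal (c ^ n) * volume (polyhedron U b) := by
  rw [polyhedron_smul U hc, Measure.addHaar_smul_of_nonneg _ hc.le, finrank_euclideanSpace_fin]

theorem volume_polyhedron_pos (U : Fin m → EuclideanSpace ℝ (Fin n)) {b : Fin m → ℝ}
    (hb : ∀ i, 0 < b i) : 0 < volume (polyhedron U b) := by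
  have hopen : IsOpen (⋂ i, {x : EuclideanSpace ℝ (Fin n) | ⟪U i, x⟫ < b i}) :=
    isOpen_iInter_of_finite fun i => isOpen_lt (by fun_prop) continuous_const
  refine (hopen.measure_pos volume ⟨0, Set.mem_iInter.2 fun i => ?_⟩).trans_le
    (measure_mono fun x hx i => (Set.mem_iInter.1 hx i).le)
  simpa using hb i

theorem inner_lt_of_mem_interior_polyhedron {b : Fin m → ℝ} {x : EuclideanSpace ℝ (Fin n)}
    (hx : x ∈ interior (polyhedron U b)) {i : Fin m} (hi : U i ≠ 0) : ⟪U i, x⟫ < b i := by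
  have hnhds : ∀ᶠ t in nhdsWithin (0 : ℝ) (Set.Ioi 0), x + t • U i ∈ polyhedron U b := by
    refine nhdsWithin_le_nhds (ContinuousAt.preimage_mem_nhds (by fun_prop) ?_)
    simpa using mem_interior_iff_mem_nhds.1 hx
  obtain ⟨t, ht, htpos⟩ := (hnhds.and self_mem_nhdsWithin).exists
  have := ht i
  rw [inner_add_right, real_inner_smul_right, real_inner_self_eq_norm_sq] at this
  have : 0 < t * ‖U i‖ ^ 2 := mul_pos htpos (by positivity)
  linarith

end Polyhedron

def volRoot {n m : ℕ} (U : Fin m → EuclideanSpace ℝ (Fin n)) (b : Fin m → ℝ) : ℝ :=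
  (volume (polyhedron U b)).toReal ^ (n⁻¹ : ℝ)

section VolRoot

variable {n m : ℕ} {U : Fin m → EuclideanSpace ℝ (Fin n)}

theorem volRoot_nonneg (U : Fin m → EuclideanSpace ℝ (Fin n)) (b : Fin m → ℝ) :
    0 ≤ volRoot U b :=
  Real.rpow_nonneg ENNReal.toReal_nonneg _

theorem volume_polyhedron_eq_one_iff (hn : n ≠ 0) (b : Fin m → ℝ) :
    volume (polyhedron U b) = 1 ↔ volRoot U b = 1 := by
  rw [volRoot, Real.rpow_inv_eq ENNReal.toReal_nonneg zero_le_one (by exact_mod_cast hn),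
    Real.one_rpow, ENNReal.toReal_eq_one_iff]

theorem ofReal_volRoot_pow (hn : n ≠ 0) (hU : PosSpanning U) (b : Fin m → ℝ) :
    ENNReal.ofReal (volRoot U b ^ n) = volume (polyhedron U b) := by
  rw [volRoot, ← Real.rpow_natCast, ← Real.rpow_mul ENNReal.toReal_nonneg,
    inv_mul_cancel₀ (by exact_mod_cast hn), Real.rpow_one,
    ENNReal.ofReal_toReal (hU.volume_polyhedron_ne_top b)]

theorem volRoot_pos (hU : PosSpanning U) {b : Fin m → ℝ} (hb : ∀ i, 0 < b i) :
    0 < volRoot U b :=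
  Real.rpow_pos_of_pos (ENNReal.toReal_pos (volume_polyhedron_pos U hb).ne'
    (hU.volume_polyhedron_ne_top b)) _

theorem volRoot_smul (hn : n ≠ 0) (U : Fin m → EuclideanSpace ℝ (Fin n)) {c : ℝ} (hc : 0 < c)
    (b : Fin m → ℝ) : volRoot U (c • b) = c * volRoot U b := by
  rw [volRoot, volume_polyhedron_smul U hc, ENNReal.toReal_mul,
    ENNReal.toReal_ofReal (by positivity), Real.mul_rpow (by positivity) ENNReal.toReal_nonneg,
    Real.pow_rpow_inv_natCast hc.le hn, volRoot]

theorem volRoot_le_of_volume_le (hU : PosSpanning U) {b c : Fin m → ℝ}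
    (h : volume (polyhedron U b) ≤ volume (polyhedron U c)) : volRoot U b ≤ volRoot U c :=
  Real.rpow_le_rpow ENNReal.toReal_nonneg
    (ENNReal.toReal_mono (hU.volume_polyhedron_ne_top c) h) (by positivity)

theorem volRoot_lt_of_volume_lt (hn : n ≠ 0) (hU : PosSpanning U) {b c : Fin m → ℝ}
    (h : volume (polyhedron U b) < volume (polyhedron U c)) : volRoot U b < volRoot U c :=
  Real.rpow_lt_rpow ENNReal.toReal_nonneg
    (ENNReal.toReal_strict_mono (hU.volume_polyhedron_ne_top c) h)
    (by positivity)

/-- Rescale `x` and `y` to unit volume and take the convex combination whose weights are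
proportional to `volRoot U x` and `volRoot U y`. -/
theorem volRoot_add_of_convex (hn : n ≠ 0) (hU : PosSpanning U)
    (hS : Convex ℝ {b : Fin m → ℝ | (∀ i, 0 ≤ b i) ∧ volume (polyhedron U b) = 1})
    {x y : Fin m → ℝ} (hx : ∀ i, 0 < x i) (hy : ∀ i, 0 < y i) :
    volRoot U (x + y) = volRoot U x + volRoot U y := by
  set a := volRoot U x
  set c := volRoot U y
  have ha : 0 < a := volRoot_pos hU hx
  have hc : 0 < c := volRoot_pos hU hy
  have hmem : ∀ {z : Fin m → ℝ}, (∀ i, 0 < z i) →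
      (volRoot U z)⁻¹ • z ∈ {b : Fin m → ℝ | (∀ i, 0 ≤ b i) ∧ volume (polyhedron U b) = 1} :=
    fun {z} hz => ⟨fun i => smul_nonneg (inv_nonneg.2 (volRoot_nonneg U z)) (hz i).le,
      (volume_polyhedron_eq_one_iff hn _).2 (by
        rw [volRoot_smul hn U (inv_pos.2 (volRoot_pos hU hz)),
          inv_mul_cancel₀ (volRoot_pos hU hz).ne'])⟩
  have hcomb := hS (hmem hx) (hmem hy) (a := a / (a + c)) (b := c / (a + c)) (by positivity)
    (by positivity) (by field_simp)
  have hvec : (a / (a + c)) • a⁻¹ • x + (c / (a + c)) • c⁻¹ • y = (a + c)⁻¹ • (x + y) := by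
    ext i
    simp only [Pi.add_apply, Pi.smul_apply, smul_eq_mul]
    field_simp
  rw [hvec, Set.mem_ofPred_eq, volume_polyhedron_eq_one_iff hn,
    volRoot_smul hn U (by positivity), inv_mul_eq_one₀ (by positivity)] at hcomb
  exact hcomb.2.symm

end VolRoot

section Separation

variable {n m : ℕ} {U : Fin m → EuclideanSpace ℝ (Fin n)}

theorem le_volume_polyhedron_of_forall_pos (hU : PosSpanning U) {b : Fin m → ℝ}
    {a : ENNReal} (h : ∀ ε : ℝ, 0 < ε → a ≤ volume (polyhedron U (b + ε • 1))) :
    a ≤ volume (polyhedron U b) := by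
  let s : ℕ → Set (EuclideanSpace ℝ (Fin n)) := fun k => polyhedron U (b + (1 / (k + 1) : ℝ) • 1)
  have hanti : Antitone s := fun k l hkl => polyhedron_mono_s19 U fun i => by
    simp only [Pi.add_apply, Pi.smul_apply, Pi.one_apply, smul_eq_mul, mul_one, add_le_add_iff_left]
    exact Nat.one_div_le_one_div hkl
  have hinter : ⋂ k, s k = polyhedron U b := by
    refine subset_antisymm (fun x hx i => le_of_forall_pos_lt_add fun ε hε => ?_)
      (Set.subset_iInter fun k =>
        polyhedron_mono_s19 U (le_add_of_nonneg_right (smul_nonneg (by positivity) zero_le_one)))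
    obtain ⟨k, hk⟩ := exists_nat_one_div_lt hε
    have := Set.mem_iInter.1 hx k i
    simp only [Pi.add_apply, Pi.smul_apply, Pi.one_apply, smul_eq_mul, mul_one] at this
    linarith
  rw [← hinter, hanti.measure_iInter (fun k => (isClosed_polyhedron_s19 U _).nullMeasurableSet)
    ⟨0, hU.volume_polyhedron_ne_top _⟩]
  exact le_iInf fun k => h _ (by positivity)

/-- Points `t • U j` with `t` slightly above `1` lie in `P(U, 1 + eⱼ)` but not in `P(U, 1)`,
because `⟪U i, U j⟫ < 1` for `i ≠ j`; they fill an open set of positive measure. -/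
theorem volume_polyhedron_one_lt (hunit : ∀ i, ‖U i‖ = 1) (hinj : Function.Injective U)
    (hU : PosSpanning U) (j : Fin m) :
    volume (polyhedron U 1) < volume (polyhedron U (1 + Pi.single j 1)) := by
  set V := {x : EuclideanSpace ℝ (Fin n) | ∀ i, ⟪U i, x⟫ < (1 + Pi.single j 1 : Fin m → ℝ) i}
  have hVopen : IsOpen V := by
    simp only [V, Set.ofPred_forall]
    exact isOpen_iInter_of_finite fun i => isOpen_lt (by fun_prop) continuous_const
  have hUjV : U j ∈ V := fun i => by
    rcases eq_or_ne i j with rfl | hij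
    · simp [hunit]
    · rw [Pi.add_apply, Pi.single_eq_of_ne hij, Pi.one_apply, add_zero]
      refine lt_of_le_of_ne (by simpa [hunit] using real_inner_le_norm (U i) (U j)) fun h => hij ?_
      exact hinj ((inner_eq_one_iff_of_norm_eq_one (hunit i) (hunit j)).1 h)
  set O := V ∩ {x | 1 < ⟪U j, x⟫}
  have hOopen : IsOpen O := hVopen.inter (isOpen_lt continuous_const (by fun_prop))
  have hOne : O.Nonempty := by
    have : ∀ᶠ t in nhdsWithin (1 : ℝ) (Set.Ioi 1), t • U j ∈ V :=
      nhdsWithin_le_nhds (ContinuousAt.preimage_mem_nhds (by fun_prop)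
        (by simpa using hVopen.mem_nhds hUjV))
    obtain ⟨t, htV, ht⟩ := (this.and self_mem_nhdsWithin).exists
    exact ⟨t • U j, htV, by
      simpa [real_inner_smul_right, real_inner_self_eq_norm_sq, hunit] using ht⟩
  have hdisj : Disjoint (polyhedron U 1) O :=
    Set.disjoint_left.2 fun x hx hxO => (hx j).not_gt (by simpa using hxO.2)
  have hsub : polyhedron U 1 ∪ O ⊆ polyhedron U (1 + Pi.single j 1) :=
    Set.union_subset (polyhedron_mono_s19 U (le_add_of_nonneg_right (Pi.single_nonneg.2 zero_le_one)))
      fun x hx i => (hx.1 i).le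
  calc volume (polyhedron U 1)
      < volume (polyhedron U 1) + volume O :=
        ENNReal.lt_add_right (hU.volume_polyhedron_ne_top 1) (hOopen.measure_pos volume hOne).ne'
    _ = volume (polyhedron U 1 ∪ O) := (measure_union hdisj hOopen.measurableSet).symm
    _ ≤ _ := measure_mono hsub

theorem volume_polyhedron_single_pos (hn : n ≠ 0) (hunit : ∀ i, ‖U i‖ = 1)
    (hinj : Function.Injective U) (hU : PosSpanning U)
    (hadd : ∀ x y : Fin m → ℝ, (∀ i, 0 < x i) → (∀ i, 0 < y i) →
      volRoot U (x + y) = volRoot U x + volRoot U y)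
    (j : Fin m) : 0 < volume (polyhedron U (Pi.single j 1)) := by
  set c := volRoot U (1 + Pi.single j 1) - volRoot U 1
  have hc : 0 < c :=
    sub_pos.2 (volRoot_lt_of_volume_lt hn hU (volume_polyhedron_one_lt hunit hinj hU j))
  refine (ENNReal.ofReal_pos.2 (pow_pos hc n)).trans_le
    (le_volume_polyhedron_of_forall_pos hU fun ε hε => ?_)
  have hsingle : (0 : Fin m → ℝ) ≤ Pi.single j 1 := Pi.single_nonneg.2 zero_le_one
  have hpos : ∀ i, 0 < (Pi.single j 1 + ε • 1 : Fin m → ℝ) i := fun i =>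
    add_pos_of_nonneg_of_pos (hsingle i) (by simpa using hε)
  have hle : volRoot U (1 + Pi.single j 1) ≤ volRoot U (1 + (Pi.single j 1 + ε • 1)) :=
    volRoot_le_of_volume_le hU (measure_mono (polyhedron_mono_s19 U
      (add_le_add_right (le_add_of_nonneg_right (smul_nonneg hε.le zero_le_one)) 1)))
  rw [hadd 1 _ (fun _ => one_pos) hpos] at hle
  rw [← ofReal_volRoot_pow hn hU]
  exact ENNReal.ofReal_le_ofReal (pow_le_pow_left₀ hc.le (by linarith) n)

theorem exists_inner_neg_of_volRoot_add (hn : n ≠ 0) (hunit : ∀ i, ‖U i‖ = 1)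
    (hinj : Function.Injective U) (hU : PosSpanning U)
    (hadd : ∀ x y : Fin m → ℝ, (∀ i, 0 < x i) → (∀ i, 0 < y i) →
      volRoot U (x + y) = volRoot U x + volRoot U y)
    (j : Fin m) : ∃ x : EuclideanSpace ℝ (Fin n), ∀ i ≠ j, ⟪U i, x⟫ < 0 := by
  obtain ⟨x, hx⟩ := (convex_polyhedron U _).interior_nonempty_of_measure_pos volume
    (volume_polyhedron_single_pos hn hunit hinj hU hadd j)
  refine ⟨x, fun i hij => ?_⟩
  have := inner_lt_of_mem_interior_polyhedron hx (i := i)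
    (norm_ne_zero_iff.1 (by rw [hunit i]; exact one_ne_zero))
  rwa [Pi.single_eq_of_ne hij] at this

end Separation

/-- if the set `{(γ(U,b), b) : b ≥ 0, vol(P(U,b)) = 1}` is convex, then
`m = n + 1`. -/
theorem stmt_19 (n m : ℕ) (hn : 0 < n) (U : Fin m → EuclideanSpace ℝ (Fin n))
    (hunit : ∀ i, ‖U i‖ = 1) (hinj : Function.Injective U) (hpos : PosSpanning U)
    (hconv : Convex ℝ {p : (Fin m → ℝ) × (Fin m → ℝ) |
      ∃ b : Fin m → ℝ, (∀ i, 0 ≤ b i) ∧ volume (polyhedron U b) = 1 ∧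
        p = (coneVol U b, b)}) :
    m = n + 1 := by
  have hS : Convex ℝ {b : Fin m → ℝ | (∀ i, 0 ≤ b i) ∧ volume (polyhedron U b) = 1} := by
    intro x hx y hy a c ha hc hac
    obtain ⟨b, hb, hvol, hp⟩ := hconv ⟨x, hx.1, hx.2, rfl⟩ ⟨y, hy.1, hy.2, rfl⟩ ha hc hac
    obtain rfl : a • x + c • y = b := by simpa using congrArg Prod.snd hp
    exact ⟨hb, hvol⟩
  have hsep := exists_inner_neg_of_volRoot_add hn.ne' hunit hinj hpos
    fun x y hx hy => volRoot_add_of_convex hn.ne' hpos hS hx hy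
  obtain ⟨lam, hlam, hlamU⟩ := hpos.exists_pos_sum_smul_eq_zero
  have : Nonempty (Fin m) := Fin.pos_iff_nonempty.1 (hn.trans_le hpos.le_card)
  simpa using card_eq_finrank_add_one hpos.surjective_linearCombination hlam hlamU hsep
end
end
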